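/- arXiv:2601.04934 — 10 statements merged into one kernel-verified Lean document; each statement's English description precedes it below -/
import Mathlib

section
/- If C is a nonempty open or closed convex subset of a finite-dimensional real vector space V, then a vector v belongs to the recession cone lim(C) = {x : C + x ⊆ C} if and only if there exist nets (or sequences) t_j ≥ 0 with t_j → 0 and c_j ∈ C such that t_j • c_j → v. -/
/-! Both conditions are compared with membership in the asymptotic cone of `C`. If `v ≠ 0`, the
sequential condition forces `t n > 0` eventually, so `c n = (t n)⁻¹ • (t n • c n)` escapes to
infinity in direction `v`; and for a convex set that is open or closed, the ray from any point of
`C` in an asymptotic direction stays in `C`. Conversely, the points `c₀ + (n + 1) • v` of `C`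
scaled by `1 / (n + 1)` converge to `v`. -/

open Filter Topology

theorem add_nsmul_mem_of_forall_add_mem {M : Type*} [AddMonoid M] {s : Set M} {v : M}
    (h : ∀ c ∈ s, c + v ∈ s) {c : M} (hc : c ∈ s) (n : ℕ) : c + n • v ∈ s := by
  induction n with
  | zero => simpa using hc
  | succ n ih => simpa [succ_nsmul, add_assoc] using h _ ih

theorem exists_seq_tendsto_smul_of_forall_add_mem {V : Type*} [AddCommGroup V] [Module ℝ V]
    [TopologicalSpace V] [ContinuousAdd V] [ContinuousSMul ℝ V] {s : Set V} (hs : s.Nonempty)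
    {v : V} (h : ∀ c ∈ s, c + v ∈ s) :
    ∃ (t : ℕ → ℝ) (c : ℕ → V), (∀ n, 0 ≤ t n) ∧ (∀ n, c n ∈ s) ∧
      Tendsto t atTop (𝓝 0) ∧ Tendsto (fun n => t n • c n) atTop (𝓝 v) := by
  obtain ⟨c₀, hc₀⟩ := hs
  have ht : Tendsto (fun n : ℕ => 1 / ((n : ℝ) + 1)) atTop (𝓝 0) :=
    tendsto_one_div_add_atTop_nhds_zero_nat
  refine ⟨fun n => 1 / ((n : ℝ) + 1), fun n => c₀ + (n + 1) • v, fun n => by positivity,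
    fun n => add_nsmul_mem_of_forall_add_mem h hc₀ (n + 1), ht, ?_⟩
  have hlim : Tendsto (fun n : ℕ => (1 / ((n : ℝ) + 1)) • c₀ + v) atTop (𝓝 v) := by
    simpa using (ht.smul_const c₀).add_const v
  refine hlim.congr fun n => ?_
  have hn : ((n : ℝ) + 1) ≠ 0 := by positivity
  rw [smul_add, ← Nat.cast_smul_eq_nsmul ℝ, smul_smul, Nat.cast_add_one, one_div_mul_cancel hn,
    one_smul]

theorem mem_asymptoticCone_of_tendsto_smul {V : Type*} [AddCommGroup V] [Module ℝ V]
    [TopologicalSpace V] [IsTopologicalAddGroup V] [ContinuousSMul ℝ V] [T1Space V]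
    {ι : Type*} {l : Filter ι} [l.NeBot] {s : Set V} (hs : s.Nonempty) {t : ι → ℝ} {c : ι → V}
    {v : V} (ht : ∀ i, 0 ≤ t i) (hc : ∀ i, c i ∈ s) (ht₀ : Tendsto t l (𝓝 0))
    (htc : Tendsto (fun i => t i • c i) l (𝓝 v)) : v ∈ asymptoticCone ℝ s := by
  rcases eq_or_ne v 0 with rfl | hv
  · exact zero_mem_asymptoticCone.mpr hs
  have hpos : ∀ᶠ i in l, 0 < t i := (htc.eventually_ne hv).mono fun i hi =>
    (ht i).lt_of_ne' fun h => hi (by rw [h, zero_smul])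
  have hinv : Tendsto (fun i => (t i)⁻¹) l atTop :=
    (tendsto_nhdsWithin_iff.mpr ⟨ht₀, hpos⟩).inv_tendsto_nhdsGT_zero
  have hc' : Tendsto c l (AffineSpace.asymptoticNhds ℝ V v) :=
    (hinv.atTop_smul_nhds_tendsto_asymptoticNhds htc).congr'
      (hpos.mono fun i hi => inv_smul_smul₀ hi.ne' (c i))
  exact hc'.frequently (Frequently.of_forall hc)

theorem Convex.add_mem_of_mem_asymptoticCone {k V : Type*} [Field k] [LinearOrder k]
    [IsStrictOrderedRing k] [TopologicalSpace k] [OrderTopology k] [AddCommGroup V] [Module k V]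
    [TopologicalSpace V] [IsTopologicalAddGroup V] [ContinuousSMul k V] {s : Set V}
    (hs : Convex k s) (hoc : IsOpen s ∨ IsClosed s) {v p : V} (hv : v ∈ asymptoticCone k s)
    (hp : p ∈ s) : p + v ∈ s := by
  rw [add_comm, ← one_smul k v]
  rcases hoc with hopen | hclosed
  · exact hs.smul_vadd_mem_of_mem_nhds_of_mem_asymptoticCone zero_le_one (hopen.mem_nhds hp) hv
  · exact hs.smul_vadd_mem_of_isClosed_of_mem_asymptoticCone hclosed zero_le_one hv hp

theorem recession_cone_mem_iff_general {V : Type*} [NormedAddCommGroup V] [NormedSpace ℝ V]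
    (C : Set V) (hconv : Convex ℝ C) (hne : C.Nonempty)
    (hoc : IsOpen C ∨ IsClosed C) (v : V) :
    (∀ c ∈ C, c + v ∈ C) ↔
      ∃ (t : ℕ → ℝ) (c : ℕ → V), (∀ n, 0 ≤ t n) ∧ (∀ n, c n ∈ C) ∧
        Tendsto t atTop (𝓝 0) ∧ Tendsto (fun n => t n • c n) atTop (𝓝 v) := by
  refine ⟨exists_seq_tendsto_smul_of_forall_add_mem hne, ?_⟩
  rintro ⟨t, c, ht, hc, ht₀, htc⟩ p hp
  exact hconv.add_mem_of_mem_asymptoticCone hoc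
    (mem_asymptoticCone_of_tendsto_smul hne ht hc ht₀ htc) hp

theorem recession_cone_mem_iff {V : Type*} [NormedAddCommGroup V] [NormedSpace ℝ V]
    [FiniteDimensional ℝ V]
    (C : Set V) (hconv : Convex ℝ C) (hne : C.Nonempty)
    (hoc : IsOpen C ∨ IsClosed C) (v : V) :
    (∀ c ∈ C, c + v ∈ C) ↔
      ∃ (t : ℕ → ℝ) (c : ℕ → V), (∀ n, 0 ≤ t n) ∧ (∀ n, c n ∈ C) ∧
        Tendsto t atTop (𝓝 0) ∧ Tendsto (fun n => t n • c n) atTop (𝓝 v) :=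
  recession_cone_mem_iff_general C hconv hne hoc v
end

section
/- Let μ be a positive Borel measure on the dual V* of a finite-dimensional real vector space whose support spans V*, and let L(μ)(v) = ∫ exp(−α(v)) dμ(α) be its Laplace transform with domain D_μ = {v : L(μ)(v) < ∞}. If x ∈ D_μ, y ∈ V, and L(μ)(x + t·y) ≤ L(μ)(x) for all t ≥ 0, then α(y) ≥ 0 for every α in the support of μ. -/
open MeasureTheory Filter Topology
open scoped ENNReal

/-- The support of a Borel measure: points all of whose open neighborhoods
have positive measure. -/
def msupport {W : Type*} [TopologicalSpace W] [MeasurableSpace W]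
    (μ : Measure W) : Set W :=
  {x | ∀ U : Set W, IsOpen U → x ∈ U → μ U ≠ 0}

theorem laplace_decreasing_ray_support_dual {V : Type*} [NormedAddCommGroup V]
    [NormedSpace ℝ V] [FiniteDimensional ℝ V]
    [MeasurableSpace (V →L[ℝ] ℝ)] [BorelSpace (V →L[ℝ] ℝ)]
    (μ : Measure (V →L[ℝ] ℝ))
    (hspan : Submodule.span ℝ (msupport μ) = ⊤)
    (L : V → ℝ≥0∞)
    (hL : ∀ v, L v = ∫⁻ α, ENNReal.ofReal (Real.exp (-(α v))) ∂μ)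
    (x y : V) (hx : L x < ⊤)
    (hdec : ∀ t : ℝ, 0 ≤ t → L (x + t • y) ≤ L x) :
    ∀ α ∈ msupport μ, 0 ≤ α y := by
  intro α₀ hα₀
  by_contra hneg
  push_neg at hneg
  set c : ℝ := -(α₀ y) / 2 with hc
  have hcpos : 0 < c := by simp [hc]; linarith
  set U : Set (V →L[ℝ] ℝ) := {α | α y < -c} with hUdef
  have hcont : Continuous fun α : V →L[ℝ] ℝ => α y :=
    (ContinuousLinearMap.apply ℝ ℝ y).continuous
  have hUopen : IsOpen U := isOpen_lt hcont continuous_const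
  have hα₀U : α₀ ∈ U := by simp only [hUdef, Set.mem_setOf_eq, hc]; linarith
  have hμU : μ U ≠ 0 := hα₀ U hUopen hα₀U
  have hmeas : ∀ v : V, Measurable fun α : V →L[ℝ] ℝ =>
      ENNReal.ofReal (Real.exp (-(α v))) := fun v =>
    (Real.continuous_exp.comp (ContinuousLinearMap.apply ℝ ℝ v).continuous.neg).measurable.ennreal_ofReal
  set C : ℝ≥0∞ := ∫⁻ α in U, ENNReal.ofReal (Real.exp (-(α x))) ∂μ with hCdef
  have hCpos : 0 < C := by
    rw [hCdef, lintegral_pos_iff_support (hmeas x)]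
    have hsupp : (Function.support fun α : V →L[ℝ] ℝ =>
        ENNReal.ofReal (Real.exp (-(α x)))) = Set.univ := by
      ext α
      simp only [Function.mem_support, Set.mem_univ, iff_true]
      exact (ENNReal.ofReal_pos.mpr (Real.exp_pos _)).ne'
    rw [hsupp, Measure.restrict_apply MeasurableSet.univ]
    simpa using pos_iff_ne_zero.mpr hμU
  have hCle : C ≤ L x := by
    rw [hL x]; exact setLIntegral_le_lintegral U _
  have hCne : C ≠ ⊤ := ne_top_of_le_ne_top hx.ne hCle
  -- key inequality: for t ≥ 0, exp(t*c) * C ≤ L x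
  have key : ∀ t : ℝ, 0 ≤ t → ENNReal.ofReal (Real.exp (t * c)) * C ≤ L x := by
    intro t ht
    have h1 : ENNReal.ofReal (Real.exp (t * c)) * C =
        ∫⁻ α in U, ENNReal.ofReal (Real.exp (t * c)) *
          ENNReal.ofReal (Real.exp (-(α x))) ∂μ := by
      rw [hCdef, lintegral_const_mul _ (hmeas x)]
    have h2 : (∫⁻ α in U, ENNReal.ofReal (Real.exp (t * c)) *
          ENNReal.ofReal (Real.exp (-(α x))) ∂μ) ≤
        ∫⁻ α in U, ENNReal.ofReal (Real.exp (-(α (x + t • y)))) ∂μ := by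
      refine setLIntegral_mono (hmeas _) ?_
      intro α hα
      rw [← ENNReal.ofReal_mul (Real.exp_pos _).le, ← Real.exp_add]
      apply ENNReal.ofReal_le_ofReal
      apply Real.exp_le_exp.mpr
      have hαy : α y < -c := hα
      have : α (x + t • y) = α x + t * α y := by
        simp [map_add, _root_.map_smul, smul_eq_mul]
      rw [this]
      nlinarith
    have h3 : (∫⁻ α in U, ENNReal.ofReal (Real.exp (-(α (x + t • y)))) ∂μ) ≤
        L (x + t • y) := by
      rw [hL]; exact setLIntegral_le_lintegral U _
    calc ENNReal.ofReal (Real.exp (t * c)) * C ≤ L (x + t • y) := by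
          rw [h1]; exact h2.trans h3
      _ ≤ L x := hdec t ht
  -- now derive contradiction by taking t large
  set c0 : ℝ := C.toReal with hc0
  have hc0pos : 0 < c0 := ENNReal.toReal_pos hCpos.ne' hCne
  set l : ℝ := (L x).toReal with hl
  set t : ℝ := max 0 (Real.log ((l + 1) / c0) / c) with htdef
  have ht0 : 0 ≤ t := le_max_left _ _
  have hlnn : 0 ≤ l := ENNReal.toReal_nonneg
  have hexp : (l + 1) / c0 ≤ Real.exp (t * c) := by
    have h : Real.log ((l + 1) / c0) ≤ t * c := by
      have : Real.log ((l + 1) / c0) / c ≤ t := le_max_right _ _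
      calc Real.log ((l + 1) / c0) = Real.log ((l + 1) / c0) / c * c := by
            field_simp
        _ ≤ t * c := by nlinarith
    calc (l + 1) / c0 = Real.exp (Real.log ((l + 1) / c0)) := by
          rw [Real.exp_log (by positivity)]
      _ ≤ Real.exp (t * c) := Real.exp_le_exp.mpr h
  have hkey := key t ht0
  have hLx : L x = ENNReal.ofReal l := by
    rw [hl, ENNReal.ofReal_toReal hx.ne]
  have hC : C = ENNReal.ofReal c0 := by
    rw [hc0, ENNReal.ofReal_toReal hCne]
  rw [hC, hLx, ← ENNReal.ofReal_mul (Real.exp_pos _).le,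
    ENNReal.ofReal_le_ofReal_iff hlnn] at hkey
  have : l + 1 ≤ l := by
    calc l + 1 = (l + 1) / c0 * c0 := by field_simp
      _ ≤ Real.exp (t * c) * c0 := by nlinarith
      _ ≤ l := hkey
  linarith
end

section
/- Let μ be a positive Borel measure on V* whose support spans V*. If there exists x with L(μ)(x) < ∞ such that L(μ)(x + t·y) = L(μ)(x) for all t ∈ ℝ, then y = 0. -/
open MeasureTheory Filter Topology
open scoped ENNReal

theorem laplace_constant_line_eq_zero {V : Type*} [NormedAddCommGroup V]
    [NormedSpace ℝ V] [FiniteDimensional ℝ V]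
    [MeasurableSpace (V →L[ℝ] ℝ)] [BorelSpace (V →L[ℝ] ℝ)]
    (μ : Measure (V →L[ℝ] ℝ))
    (hspan : Submodule.span ℝ (msupport μ) = ⊤)
    (L : V → ℝ≥0∞)
    (hL : ∀ v, L v = ∫⁻ α, ENNReal.ofReal (Real.exp (-(α v))) ∂μ)
    (x y : V) (hx : L x < ⊤)
    (hconst : ∀ t : ℝ, L (x + t • y) = L x) :
    y = 0 := by
  have hcont : ∀ v : V, Continuous fun β : V →L[ℝ] ℝ => β v := fun v =>
    (ContinuousLinearMap.apply ℝ ℝ v).continuous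
  -- Step 1: every functional in the support of μ kills y.
  have key : ∀ α ∈ msupport μ, α y = 0 := by
    intro α hα
    by_contra hαy
    set b : ℝ := (α y) ^ 2 / 2 with hbdef
    have hbpos : 0 < b := by positivity
    set c : ℝ := α x + 1 with hcdef
    set U : Set (V →L[ℝ] ℝ) := {β | b < α y * β y} ∩ {β | β x < c} with hUdef
    have hUopen : IsOpen U :=
      (isOpen_lt continuous_const (continuous_const.mul (hcont y))).inter
        (isOpen_lt (hcont x) continuous_const)
    have hαU : α ∈ U := by
      constructor
      · simp only [Set.mem_setOf_eq, hbdef, ← sq]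
        have : (0:ℝ) < (α y) ^ 2 := by positivity
        linarith
      · simp [hcdef]
    have hm : μ U ≠ 0 := hα U hUopen hαU
    -- choose the constant K
    obtain ⟨K, hK1, hKm⟩ : ∃ K : ℝ, 1 ≤ K ∧ L x < ENNReal.ofReal K * μ U := by
      rcases eq_or_ne (μ U) ⊤ with hmt | hmt
      · exact ⟨1, le_rfl, by simp [hmt, hx]⟩
      · set c₀ : ℝ≥0∞ := (L x + 1) / μ U with hc₀
        have hc₀top : c₀ ≠ ⊤ :=
          (ENNReal.div_lt_top (by simp [lt_top_iff_ne_top.mp (by simpa using hx.trans_le le_top), ENNReal.add_ne_top, hx.ne]) hm).ne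
        refine ⟨max 1 (c₀.toReal + 1), le_max_left _ _, ?_⟩
        have h1 : c₀ < ENNReal.ofReal (max 1 (c₀.toReal + 1)) := by
          calc c₀ = ENNReal.ofReal c₀.toReal := (ENNReal.ofReal_toReal hc₀top).symm
          _ < ENNReal.ofReal (c₀.toReal + 1) := by
              exact ENNReal.ofReal_lt_ofReal_iff (by positivity) |>.mpr (by linarith)
          _ ≤ _ := ENNReal.ofReal_le_ofReal (le_max_right _ _)
        have h2 : c₀ * μ U = L x + 1 := ENNReal.div_mul_cancel hm hmt
        calc L x < L x + 1 := ENNReal.lt_add_right hx.ne one_ne_zero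
        _ = c₀ * μ U := h2.symm
        _ ≤ ENNReal.ofReal (max 1 (c₀.toReal + 1)) * μ U :=
            mul_le_mul_left h1.le _
    have hKpos : (0:ℝ) < K := lt_of_lt_of_le one_pos hK1
    set s : ℝ := max 0 ((Real.log K + c) / b) with hsdef
    set t : ℝ := -s * α y with htdef
    -- pointwise lower bound on U
    have hpt : ∀ β ∈ U, ENNReal.ofReal K ≤ ENNReal.ofReal (Real.exp (-(β (x + t • y)))) := by
      intro β hβ
      obtain ⟨hβ1, hβ2⟩ := hβ
      have hsnonneg : 0 ≤ s := le_max_left _ _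
      have hval : β (x + t • y) = β x + t * β y := by
        simp [map_add, _root_.map_smul, smul_eq_mul]
      have hty : t * β y ≤ -s * b := by
        have h1 : b ≤ α y * β y := le_of_lt hβ1
        have h2 : s * b ≤ s * (α y * β y) := mul_le_mul_of_nonneg_left h1 hsnonneg
        have h3 : t * β y = -(s * (α y * β y)) := by rw [htdef]; ring
        linarith
      have hbound : β (x + t • y) ≤ c - s * b := by
        rw [hval]; have : β x < c := hβ2; linarith
      have hexp : K ≤ Real.exp (-(β (x + t • y))) := by
        have h1 : s * b - c ≤ -(β (x + t • y)) := by linarith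
        have h2 : Real.log K ≤ s * b - c := by
          have hs' : (Real.log K + c) / b ≤ s := le_max_right _ _
          have := mul_le_mul_of_nonneg_right hs' hbpos.le
          rw [div_mul_cancel₀ _ hbpos.ne'] at this
          linarith
        calc K = Real.exp (Real.log K) := (Real.exp_log hKpos).symm
        _ ≤ Real.exp (-(β (x + t • y))) := Real.exp_le_exp.mpr (h2.trans h1)
      exact ENNReal.ofReal_le_ofReal hexp
    have hmeas : Measurable fun β : V →L[ℝ] ℝ =>
        ENNReal.ofReal (Real.exp (-(β (x + t • y)))) :=
      (ENNReal.continuous_ofReal.comp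
        (Real.continuous_exp.comp (hcont (x + t • y)).neg)).measurable
    have hlb : ENNReal.ofReal K * μ U ≤ L (x + t • y) := by
      rw [hL]
      calc ENNReal.ofReal K * μ U = ∫⁻ _ in U, ENNReal.ofReal K ∂μ :=
            (setLIntegral_const U _).symm
      _ ≤ ∫⁻ β in U, ENNReal.ofReal (Real.exp (-(β (x + t • y)))) ∂μ :=
            setLIntegral_mono hmeas hpt
      _ ≤ _ := setLIntegral_le_lintegral U _
    have := hconst t
    rw [this] at hlb
    exact absurd (hKm.trans_le hlb) (lt_irrefl _)
  -- Step 2: all continuous functionals vanish at y, hence y = 0.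
  have hall : ∀ α : V →L[ℝ] ℝ, α y = 0 := by
    intro α
    set e : (V →L[ℝ] ℝ) →ₗ[ℝ] ℝ := (ContinuousLinearMap.apply ℝ ℝ y).toLinearMap with he
    have hsub : msupport μ ⊆ (LinearMap.ker e : Set (V →L[ℝ] ℝ)) := by
      intro β hβ
      exact key β hβ
    have : Submodule.span ℝ (msupport μ) ≤ LinearMap.ker e := Submodule.span_le.mpr hsub
    rw [hspan] at this
    exact this (Submodule.mem_top)
  exact NormedSpace.eq_zero_of_forall_dual_eq_zero ℝ hall
end

section
/- If the closed convex hull of the support of μ has nonempty interior in V*, then L(μ) and log L(μ) are strictly convex on the convex set D_μ = {v : L(μ)(v) < ∞} (whenever D_μ has at least two points). -/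
open MeasureTheory Filter Topology
open scoped ENNReal

/-! With `u = -α x` and `w = -α y`, the integrand of `L (a • x + b • y)` is `exp (a u + b w)`.
After shifting `u` and `w` by the logarithms of their integrals, strict convexity of `exp` gives
`exp (a u + b w) ≤ a exp u + b exp w`, strictly where `u ≠ w`; integrating yields the Hölder
bound `L (a • x + b • y) ≤ L x ^ a * L y ^ b`, strict unless `α (y - x)` is `μ`-a.e. constant.
That would confine the support of `μ`, and with it its closed convex hull, to an affine
hyperplane of the dual, which has empty interior. Weighted AM-GM then bounds the geometric mean
by the arithmetic one. -/

theorem msupport_subset_of_ae_mem {W : Type*} [TopologicalSpace W] [MeasurableSpace W]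
    {μ : Measure W} {S : Set W} (hS : IsClosed S) (hμS : ∀ᵐ x ∂μ, x ∈ S) :
    msupport μ ⊆ S := fun x hx => by
  by_contra hxS
  exact hx Sᶜ hS.isOpen_compl hxS (ae_iff.1 hμS)

theorem ContinuousLinearMap.interior_preimage_singleton_eq_empty {𝕜 M : Type*}
    [NontriviallyNormedField 𝕜] [AddCommGroup M] [TopologicalSpace M] [ContinuousAdd M]
    [Module 𝕜 M] [ContinuousSMul 𝕜 M] {f : StrongDual 𝕜 M} (hf : f ≠ 0) (c : 𝕜) :
    interior (f ⁻¹' {c}) = ∅ := by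
  rw [← (f.isOpenMap_of_ne_zero hf).preimage_interior_eq_interior_preimage f.continuous,
    interior_singleton, Set.preimage_empty]

theorem interior_closure_convexHull_msupport_eq_empty_of_ae_eq {W : Type*} [AddCommGroup W]
    [TopologicalSpace W] [ContinuousAdd W] [Module ℝ W] [ContinuousSMul ℝ W] [MeasurableSpace W]
    {μ : Measure W} {f : StrongDual ℝ W} (hf : f ≠ 0) {c : ℝ} (hμ : ∀ᵐ x ∂μ, f x = c) :
    interior (closure (convexHull ℝ (msupport μ))) = ∅ := by
  have hclosed : IsClosed (f ⁻¹' {c}) := isClosed_singleton.preimage f.continuous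
  have hsub : closure (convexHull ℝ (msupport μ)) ⊆ f ⁻¹' {c} :=
    closure_minimal (convexHull_min (msupport_subset_of_ae_mem hclosed hμ)
      ((convex_singleton c).linear_preimage f.toLinearMap)) hclosed
  exact Set.subset_empty_iff.1 <|
    (f.interior_preimage_singleton_eq_empty hf c) ▸ interior_mono hsub

theorem ContinuousLinearMap.apply_ne_zero {𝕜 V : Type*} [RCLike 𝕜] [NormedAddCommGroup V]
    [NormedSpace 𝕜 V] {v : V} (hv : v ≠ 0) : ContinuousLinearMap.apply 𝕜 𝕜 v ≠ 0 := by
  obtain ⟨f, hf⟩ := SeparatingDual.exists_ne_zero (R := 𝕜) hv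
  exact fun h => hf (by simpa using DFunLike.congr_fun h f)

theorem ENNReal.geom_mean_le_arith_mean2_weighted {p q : ℝ≥0∞} (hp : p ≠ ∞) (hq : q ≠ ∞)
    {a b : ℝ} (ha : 0 ≤ a) (hb : 0 ≤ b) (hab : a + b = 1) :
    p ^ a * q ^ b ≤ ENNReal.ofReal a * p + ENNReal.ofReal b * q := by
  rw [← ofReal_toReal hp, ← ofReal_toReal hq, ofReal_rpow_of_nonneg toReal_nonneg ha,
    ofReal_rpow_of_nonneg toReal_nonneg hb, ← ofReal_mul (by positivity), ← ofReal_mul ha,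
    ← ofReal_mul hb, ← ofReal_add (by positivity) (by positivity)]
  exact ofReal_le_ofReal <|
    Real.geom_mean_le_arith_mean2_weighted ha hb toReal_nonneg toReal_nonneg hab

section
variable {X : Type*} [MeasurableSpace X] {μ : Measure X} {u w : X → ℝ} {a b : ℝ}

open Real ENNReal

theorem lintegral_exp_convexComb_lt_one (hu : AEMeasurable u μ) (hw : AEMeasurable w μ)
    (hu1 : ∫⁻ x, .ofReal (exp (u x)) ∂μ = 1) (hw1 : ∫⁻ x, .ofReal (exp (w x)) ∂μ = 1)
    (huw : ¬ u =ᵐ[μ] w) (ha : 0 < a) (hb : 0 < b) (hab : a + b = 1) :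
    ∫⁻ x, .ofReal (exp (a * u x + b * w x)) ∂μ < 1 := by
  have hle : ∀ x, exp (a * u x + b * w x) ≤ a * exp (u x) + b * exp (w x) := fun x => by
    simpa using convexOn_exp.2 (Set.mem_univ (u x)) (Set.mem_univ (w x)) ha.le hb.le hab
  have hlt : ∀ x, u x ≠ w x → exp (a * u x + b * w x) < a * exp (u x) + b * exp (w x) :=
    fun x hx => by
      simpa using strictConvexOn_exp.2 (Set.mem_univ (u x)) (Set.mem_univ (w x)) hx ha hb hab
  have hmean : ∫⁻ x, .ofReal (a * exp (u x) + b * exp (w x)) ∂μ = 1 := by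
    have hsplit : ∀ x, ENNReal.ofReal (a * exp (u x) + b * exp (w x)) =
        .ofReal a * .ofReal (exp (u x)) + .ofReal b * .ofReal (exp (w x)) := fun x => by
      rw [ofReal_add (by positivity) (by positivity), ofReal_mul ha.le, ofReal_mul hb.le]
    simp_rw [hsplit]
    rw [lintegral_add_left' (by fun_prop), lintegral_const_mul'' _ (by fun_prop),
      lintegral_const_mul'' _ (by fun_prop), hu1, hw1, mul_one, mul_one, ← ofReal_add ha.le hb.le,
      hab, ofReal_one]
  refine hmean ▸ lintegral_strict_mono_of_ae_le_of_frequently_ae_lt (by fun_prop) ?_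
    (ae_of_all _ fun x => ofReal_le_ofReal (hle x)) ?_
  · exact ne_top_of_le_ne_top (hmean ▸ one_ne_top)
      (lintegral_mono fun x => ofReal_le_ofReal (hle x))
  · exact (not_eventually.1 huw).mono fun x hx =>
      ((ofReal_lt_ofReal_iff (by positivity)).2 (hlt x hx)).ne

theorem lintegral_ofReal_exp_sub_log_eq_one (hfin : ∫⁻ x, .ofReal (exp (u x)) ∂μ ≠ ∞)
    (hpos : ∫⁻ x, .ofReal (exp (u x)) ∂μ ≠ 0) :
    ∫⁻ x, .ofReal (exp (u x - log (∫⁻ x, .ofReal (exp (u x)) ∂μ).toReal)) ∂μ = 1 := by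
  set A := ∫⁻ x, .ofReal (exp (u x)) ∂μ
  have hA : 0 < A.toReal := toReal_pos hpos hfin
  simp_rw [exp_sub, exp_log hA, div_eq_mul_inv, ofReal_mul (exp_pos _).le]
  rw [lintegral_mul_const' _ _ ofReal_ne_top, ofReal_inv_of_pos hA, ofReal_toReal hfin,
    ENNReal.mul_inv_cancel hpos hfin]

theorem lintegral_exp_convexComb_lt (hu : AEMeasurable u μ) (hw : AEMeasurable w μ)
    (hu_fin : ∫⁻ x, .ofReal (exp (u x)) ∂μ ≠ ∞) (hw_fin : ∫⁻ x, .ofReal (exp (w x)) ∂μ ≠ ∞)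
    (huw : ∀ c, ¬ ∀ᵐ x ∂μ, u x - w x = c) (ha : 0 < a) (hb : 0 < b) (hab : a + b = 1) :
    ∫⁻ x, .ofReal (exp (a * u x + b * w x)) ∂μ <
      (∫⁻ x, .ofReal (exp (u x)) ∂μ) ^ a * (∫⁻ x, .ofReal (exp (w x)) ∂μ) ^ b := by
  -- `huw 0` rules out the zero measure, so these integrals of positive functions are positive.
  have hne : ∀ f : X → ℝ, AEMeasurable f μ → ∫⁻ x, .ofReal (exp (f x)) ∂μ ≠ 0 := fun f hf h0 =>
    huw 0 <| ((lintegral_eq_zero_iff' (by fun_prop)).1 h0).mono fun x hx =>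
      absurd hx (ofReal_pos.2 (exp_pos _)).ne'
  set A := ∫⁻ x, .ofReal (exp (u x)) ∂μ
  set B := ∫⁻ x, .ofReal (exp (w x)) ∂μ
  have hA : 0 < A.toReal := toReal_pos (hne u hu) hu_fin
  have hB : 0 < B.toReal := toReal_pos (hne w hw) hw_fin
  have hnormalized := lintegral_exp_convexComb_lt_one (hu.sub_const (log A.toReal))
    (hw.sub_const (log B.toReal)) (lintegral_ofReal_exp_sub_log_eq_one hu_fin (hne u hu))
    (lintegral_ofReal_exp_sub_log_eq_one hw_fin (hne w hw))
    (fun h => huw (log A.toReal - log B.toReal) (h.mono fun x hx => by linarith [hx]))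
    ha hb hab
  have hconst : A ^ a * B ^ b = .ofReal (exp (a * log A.toReal + b * log B.toReal)) := by
    rw [exp_add, ofReal_mul (exp_pos _).le, mul_comm a, mul_comm b, ← rpow_def_of_pos hA,
      ← rpow_def_of_pos hB, ← ofReal_rpow_of_pos hA, ← ofReal_rpow_of_pos hB,
      ofReal_toReal hu_fin, ofReal_toReal hw_fin]
  have hshift : ∀ x, ENNReal.ofReal (exp (a * u x + b * w x)) =
      .ofReal (exp (a * (u x - log A.toReal) + b * (w x - log B.toReal))) * (A ^ a * B ^ b) :=
    fun x => by
      rw [hconst, ← ofReal_mul (exp_pos _).le, ← exp_add]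
      ring_nf
  simp_rw [hshift]
  rw [lintegral_mul_const' _ _ (hconst ▸ ofReal_ne_top)]
  calc _ < 1 * (A ^ a * B ^ b) :=
        ENNReal.mul_lt_mul_left (hconst ▸ (ofReal_pos.2 (exp_pos _)).ne') (hconst ▸ ofReal_ne_top)
          hnormalized
    _ = _ := one_mul _

end

theorem laplace_strictly_convex_general {V : Type*} [NormedAddCommGroup V]
    [NormedSpace ℝ V]
    [MeasurableSpace (V →L[ℝ] ℝ)] [BorelSpace (V →L[ℝ] ℝ)]
    (μ : Measure (V →L[ℝ] ℝ))
    (hint : (interior (closure (convexHull ℝ (msupport μ)))).Nonempty)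
    (L : V → ℝ≥0∞)
    (hL : ∀ v, L v = ∫⁻ α, ENNReal.ofReal (Real.exp (-(α v))) ∂μ) :
    ∀ x y : V, L x < ⊤ → L y < ⊤ → x ≠ y → ∀ a b : ℝ, 0 < a → 0 < b → a + b = 1 →
      L (a • x + b • y) < ENNReal.ofReal a * L x + ENNReal.ofReal b * L y ∧
      L (a • x + b • y) < L x ^ a * L y ^ b := by
  intro x y hLx hLy hxy a b ha hb hab
  have hnot_hyperplane : ∀ c, ¬ ∀ᵐ α ∂μ, -(α x) - -(α y) = c := fun c hc =>
    hint.ne_empty <| interior_closure_convexHull_msupport_eq_empty_of_ae_eq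
      (ContinuousLinearMap.apply_ne_zero (sub_ne_zero.2 hxy.symm)) (c := c) <| hc.mono
        fun α hα => by rw [ContinuousLinearMap.apply_apply, map_sub]; linarith
  have hmid : L (a • x + b • y) = ∫⁻ α, .ofReal (Real.exp (a * -(α x) + b * -(α y))) ∂μ := by
    simp only [hL, map_add, map_smul, smul_eq_mul, neg_add, mul_neg]
  have hgeom : L (a • x + b • y) < L x ^ a * L y ^ b := by
    rw [hmid, hL x, hL y]
    exact lintegral_exp_convexComb_lt (continuous_eval_const x).aemeasurable.neg
      (continuous_eval_const y).aemeasurable.neg (hL x ▸ hLx.ne)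
      (hL y ▸ hLy.ne) hnot_hyperplane ha hb hab
  exact ⟨hgeom.trans_le (ENNReal.geom_mean_le_arith_mean2_weighted hLx.ne hLy.ne ha.le hb.le hab),
    hgeom⟩

theorem laplace_strictly_convex {V : Type*} [NormedAddCommGroup V]
    [NormedSpace ℝ V] [FiniteDimensional ℝ V]
    [MeasurableSpace (V →L[ℝ] ℝ)] [BorelSpace (V →L[ℝ] ℝ)]
    (μ : Measure (V →L[ℝ] ℝ))
    (hint : (interior (closure (convexHull ℝ (msupport μ)))).Nonempty)
    (L : V → ℝ≥0∞)
    (hL : ∀ v, L v = ∫⁻ α, ENNReal.ofReal (Real.exp (-(α v))) ∂μ) :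
    ∀ x y : V, L x < ⊤ → L y < ⊤ → x ≠ y → ∀ a b : ℝ, 0 < a → 0 < b → a + b = 1 →
      L (a • x + b • y) < ENNReal.ofReal a * L x + ENNReal.ofReal b * L y ∧
      L (a • x + b • y) < L x ^ a * L y ^ b :=
  laplace_strictly_convex_general μ hint L hL
end

section
/- Let (X,Σ,μ) be a finite measure space and f : X → X a measure-preserving bimeasurable bijection. Then for every E ∈ Σ, the set of points x ∈ E such that f^n(x) ∉ E for all sufficiently large n has measure zero. -/
open MeasureTheory

theorem poincare_recurrence {X : Type*} [MeasurableSpace X]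
    (μ : Measure X) [IsFiniteMeasure μ]
    (f : X ≃ X) (hf : Measurable f) (hf' : Measurable f.symm)
    (hμ : MeasurePreserving f μ μ)
    (E : Set X) (hE : MeasurableSet E) :
    μ {x ∈ E | ∃ N : ℕ, ∀ n > N, (⇑f)^[n] x ∉ E} = 0 := by
  have hc : Conservative (⇑f) μ := hμ.conservative
  have hsub : {x ∈ E | ∃ N : ℕ, ∀ n > N, (⇑f)^[n] x ∉ E} ⊆
      ⋃ N : ℕ, {x ∈ E | ∀ n ≥ N + 1, (⇑f)^[n] x ∉ E} := by
    rintro x ⟨hxE, N, hN⟩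
    exact Set.mem_iUnion.2 ⟨N, hxE, fun n hn => hN n hn⟩
  refine measure_mono_null hsub (measure_iUnion_null fun N => ?_)
  exact hc.measure_mem_forall_ge_image_notMem_eq_zero hE.nullMeasurableSet (N + 1)
end

section
/- Let g ∈ GL(V) for V a finite-dimensional real vector space, with multiplicative Jordan decomposition g = g_e g_h g_u into commuting elliptic, hyperbolic, and unipotent parts. For v ∈ V, the following are equivalent: (i) both sequences (gⁿ v)_{n≥0} and (g⁻ⁿ v)_{n≥0} are bounded; (ii) v is fixed by g_h g_u. -/
/-!
The powers of `ge` form a bounded set of operators commuting with `k = gh * gu`, so the orbits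
of `v` under `g = ge * k` and under `k` are bounded (in both time directions) together. The
vectors with bounded two-sided `k`-orbit form a `gh`-invariant subspace, hence the sum of its
intersections with the eigenspaces of `gh`. If `gh x = t • x` with `t > 1`, then
`kⁿ x = tⁿ • guⁿ x`, so the forward `gu`-orbit of `x` is bounded; a unipotent operator fixes every
point with bounded forward orbit (once `y = (gu - 1) x` is fixed, `guⁿ x = x + n • y`), so
`kⁿ x = tⁿ • x` and `x = 0`. For `t < 1` run the same argument with `k⁻¹`. Hence `gh` fixes every
vector with bounded orbit, and then so does `gu`.
-/

open Bornology

open Set Polynomial Module.End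

section Eigenbasis

variable {ι K V : Type*} [Field K] [AddCommGroup V] [Module K V] {f : Module.End K V}

theorem iSup_eigenspace_eq_top_of_basis (b : Module.Basis ι K V) {c : ι → K}
    (hb : ∀ i, f (b i) = c i • b i) : ⨆ μ, f.eigenspace μ = ⊤ := by
  rw [eq_top_iff, ← b.span_eq, Submodule.span_le, range_subset_iff]
  exact fun i => Submodule.mem_iSup_of_mem (c i) (mem_eigenspace_iff.2 (hb i))

theorem mem_range_of_hasEigenvector_of_basis [Fintype ι] (b : Module.Basis ι K V) {c : ι → K}
    (hb : ∀ i, f (b i) = c i • b i) {μ : K} {x : V} (hx : f.HasEigenvector μ x) :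
    μ ∈ range c := by
  set p : K[X] := ∏ i, (X - C (c i))
  have hp : aeval f p = 0 := b.ext fun i => by
    rw [aeval_apply_of_hasEigenvector ⟨mem_eigenspace_iff.2 (hb i), b.ne_zero i⟩]
    simp [p, eval_prod, Finset.prod_eq_zero (Finset.mem_univ i)]
  have hpx := aeval_apply_of_hasEigenvector (p := p) hx
  rw [hp, LinearMap.zero_apply, eq_comm, smul_eq_zero] at hpx
  obtain ⟨i, -, hi⟩ := Finset.prod_eq_zero_iff.1 <| by
    simpa [p, eval_prod] using hpx.resolve_right hx.2
  exact ⟨i, (sub_eq_zero.1 hi).symm⟩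

theorem Submodule.le_eigenspace_of_inf_eigenspace_eq_bot [FiniteDimensional K V]
    {p : Submodule K V} (hp : ∀ x ∈ p, f x ∈ p) (hf : ⨆ μ, f.eigenspace μ = ⊤) {μ₀ : K}
    (h : ∀ μ ≠ μ₀, p ⊓ f.eigenspace μ = ⊥) : p ≤ f.eigenspace μ₀ :=
  calc p = p ⊓ ⨆ μ, f.eigenspace μ := by rw [hf, inf_top_eq]
    _ = ⨆ μ, p ⊓ f.eigenspace μ := Submodule.inf_iSup_genEigenspace hp 1
    _ ≤ f.eigenspace μ₀ := iSup_le fun μ => by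
      obtain rfl | hμ := eq_or_ne μ μ₀
      · exact inf_le_right
      · exact (h μ hμ).trans_le bot_le

end Eigenbasis

theorem pow_smul_eq_pow_smul_of_smul_eq {M R V : Type*} [Monoid M] [Monoid R] [MulAction M V]
    [MulAction R V] [SMulCommClass M R V] {m : M} {r : R} {x : V} (h : m • x = r • x) (n : ℕ) :
    m ^ n • x = r ^ n • x := by
  induction n with
  | zero => simp
  | succ n ih => rw [pow_succ, mul_smul, h, smul_comm, ih, smul_smul, ← pow_succ']

section BoundedSequences

variable {E : Type*} [NormedAddCommGroup E] [NormedSpace ℝ E]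

theorem eq_zero_of_isBounded_range_add_nsmul {x y : E}
    (h : IsBounded (range fun n : ℕ => x + n • y)) : y = 0 := by
  obtain ⟨C, hC⟩ := h.exists_norm_le
  by_contra hy
  obtain ⟨n, hn⟩ := exists_nat_gt ((C + ‖x‖) / ‖y‖)
  rw [div_lt_iff₀ (norm_pos_iff.2 hy)] at hn
  have : (n : ℝ) * ‖y‖ ≤ C + ‖x‖ :=
    calc (n : ℝ) * ‖y‖ = ‖(x + n • y) - x‖ := by
          rw [add_sub_cancel_left, RCLike.norm_nsmul ℝ, nsmul_eq_mul]
      _ ≤ ‖x + n • y‖ + ‖x‖ := norm_sub_le _ _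
      _ ≤ C + ‖x‖ := by gcongr; exact hC _ (mem_range_self n)
  linarith

theorem eq_zero_of_isBounded_range_pow_smul {t : ℝ} (ht : 1 < t) {x : E}
    (h : IsBounded (range fun n : ℕ => t ^ n • x)) : x = 0 := by
  obtain ⟨C, hC⟩ := h.exists_norm_le
  by_contra hx
  obtain ⟨n, hn⟩ := pow_unbounded_of_one_lt (C / ‖x‖) ht
  have := hC _ (mem_range_self n)
  rw [norm_smul, Real.norm_of_nonneg (by positivity), ← le_div_iff₀ (norm_pos_iff.2 hx)]
    at this
  exact hn.not_ge this

end BoundedSequences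

theorem isBounded_range_apply {𝕜 E F ι : Type*} [NontriviallyNormedField 𝕜]
    [NormedAddCommGroup E] [NormedSpace 𝕜 E] [NormedAddCommGroup F] [NormedSpace 𝕜 F]
    {T : ι → E →L[𝕜] F} {x : ι → E} (hT : IsBounded (range T)) (hx : IsBounded (range x)) :
    IsBounded (range fun i => T i (x i)) := by
  obtain ⟨C, hC⟩ := hT.exists_norm_le
  obtain ⟨D, hD⟩ := hx.exists_norm_le
  refine isBounded_iff_forall_norm_le.2 ⟨C * D, ?_⟩
  rintro _ ⟨i, rfl⟩
  exact (T i).le_of_opNorm_le_of_le (hC _ (mem_range_self i)) (hD _ (mem_range_self i))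

theorem Units.isNilpotent_inv_sub_one {R : Type*} [Ring R] {u : Rˣ}
    (hu : IsNilpotent ((u : R) - 1)) : IsNilpotent ((↑u⁻¹ : R) - 1) := by
  have h : (↑u⁻¹ : R) - 1 = -(↑u⁻¹ * ((u : R) - 1)) := by
    rw [mul_sub, Units.inv_mul, mul_one, neg_sub]
  have hcomm : Commute (↑u⁻¹ : R) ((u : R) - 1) :=
    (Commute.refl (u : R)).units_inv_left.sub_right (Commute.one_right _)
  rw [h]
  exact (hcomm.isNilpotent_mul_left hu).neg

section Operators

variable {V : Type*} [NormedAddCommGroup V] [NormedSpace ℝ V]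

theorem apply_eq_self_of_isBounded_range_pow_apply {T : V →L[ℝ] V} {N : ℕ} {x : V}
    (hN : ((T - 1) ^ N) x = 0) (hx : IsBounded (range fun n : ℕ => (T ^ n) x)) : T x = x := by
  induction N generalizing x with
  | zero => simp_all
  | succ N ih =>
    set y := (T - 1) x with hy
    have hTy : T y = y := by
      refine ih (by rwa [← mul_apply_eq_comp, ← pow_succ]) ?_
      have hcomm (n : ℕ) : (T ^ n) y = (T - 1) ((T ^ n) x) := by
        rw [hy, ← mul_apply_eq_comp, ← mul_apply_eq_comp,
          (((Commute.refl T).sub_right (Commute.one_right T)).pow_left n).eq]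
      simpa only [hcomm, range_comp'] using (T - 1).lipschitz.isBounded_image hx
    have horbit (n : ℕ) : (T ^ n) x = x + n • y := by
      induction n with
      | zero => simp
      | succ n ih =>
        rw [pow_succ', mul_apply_eq_comp, ih, map_add, map_nsmul, hTy, hy,
          sub_apply, one_apply_eq_self, succ_nsmul]
        abel
    have := eq_zero_of_isBounded_range_add_nsmul (by simpa only [horbit] using hx)
    rwa [hy, sub_apply, one_apply_eq_self, sub_eq_zero] at this

def boundedOrbits (k : (V →L[ℝ] V)ˣ) : Submodule ℝ V where
  carrier := {v | IsBounded (range fun n : ℤ => (k ^ n) • v)}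
  add_mem' {v w} hv hw := (isBounded_add hv hw).subset <| by
    rintro _ ⟨n, rfl⟩
    exact ⟨_, mem_range_self n, _, mem_range_self n, (smul_add _ _ _).symm⟩
  zero_mem' := by
    change IsBounded (range fun n : ℤ => (k ^ n) • (0 : V))
    simp
  smul_mem' c v hv := (hv.smul₀ c).subset <| by
    rintro _ ⟨n, rfl⟩
    exact ⟨_, mem_range_self n, (smul_comm _ _ _).symm⟩

theorem mem_boundedOrbits {k : (V →L[ℝ] V)ˣ} {v : V} :
    v ∈ boundedOrbits k ↔ IsBounded (range fun n : ℤ => (k ^ n) • v) :=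
  Iff.rfl

theorem mem_boundedOrbits_iff_nat {k : (V →L[ℝ] V)ˣ} {v : V} :
    v ∈ boundedOrbits k ↔
      IsBounded (range fun n : ℕ => (k ^ n) • v) ∧
        IsBounded (range fun n : ℕ => (k⁻¹ ^ n) • v) := by
  refine ⟨fun h => ⟨h.subset ?_, h.subset ?_⟩, fun ⟨h₁, h₂⟩ => (h₁.union h₂).subset ?_⟩
  · exact range_subset_iff.2 fun n => ⟨n, by simp⟩
  · exact range_subset_iff.2 fun n => ⟨-n, by simp⟩
  · refine range_subset_iff.2 fun n => ?_
    obtain ⟨m, rfl | rfl⟩ := Int.eq_nat_or_neg n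
    · exact Or.inl ⟨m, by simp⟩
    · exact Or.inr ⟨m, by simp⟩

theorem boundedOrbits_mul_of_isBounded {e k : (V →L[ℝ] V)ˣ} (hek : Commute e k)
    (he : IsBounded (range fun n : ℤ => ((e ^ n : (V →L[ℝ] V)ˣ) : V →L[ℝ] V))) :
    boundedOrbits (e * k) = boundedOrbits k := by
  have he' : IsBounded (range fun n : ℤ => ((e ^ (-n) : (V →L[ℝ] V)ˣ) : V →L[ℝ] V)) := by
    rwa [← (Equiv.neg ℤ).surjective.range_comp] at he
  ext v
  simp only [mem_boundedOrbits]
  constructor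
  · intro hv
    convert isBounded_range_apply he' hv using 3 with n
    change _ = e ^ (-n) • ((e * k) ^ n • v)
    rw [hek.mul_zpow, mul_smul, smul_smul, ← zpow_add, neg_add_cancel, zpow_zero, one_smul]
  · intro hv
    convert isBounded_range_apply he hv using 3 with n
    rw [hek.mul_zpow, mul_smul]
    rfl

theorem smul_mem_boundedOrbits {h k : (V →L[ℝ] V)ˣ} (hhk : Commute h k) {v : V}
    (hv : v ∈ boundedOrbits k) : h • v ∈ boundedOrbits k := by
  rw [mem_boundedOrbits] at hv ⊢
  have := (h : V →L[ℝ] V).lipschitz.isBounded_image hv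
  rw [← range_comp] at this
  convert this using 3 with n
  change _ = h • k ^ n • v
  rw [smul_smul, smul_smul, (hhk.zpow_right n).eq]

theorem smul_eq_self_of_isBounded_range_pow_smul {u : (V →L[ℝ] V)ˣ}
    (hu : IsNilpotent ((u : V →L[ℝ] V) - 1)) {x : V}
    (hx : IsBounded (range fun n : ℕ => u ^ n • x)) : u • x = x := by
  obtain ⟨N, hN⟩ := hu
  refine apply_eq_self_of_isBounded_range_pow_apply (N := N) (by rw [hN]; rfl) ?_
  simp only [← Units.val_pow_eq_pow_val]
  exact hx

theorem eq_zero_of_isBounded_range_mul_pow_smul {h u : (V →L[ℝ] V)ˣ} (hhu : Commute h u)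
    (hu : IsNilpotent ((u : V →L[ℝ] V) - 1)) {t : ℝ} (ht : 1 < t) {x : V} (hx : h • x = t • x)
    (hb : IsBounded (range fun n : ℕ => (h * u) ^ n • x)) : x = 0 := by
  have horbit (n : ℕ) : (h * u) ^ n • x = t ^ n • u ^ n • x := by
    rw [hhu.mul_pow, (hhu.pow_pow n n).eq, mul_smul, pow_smul_eq_pow_smul_of_smul_eq hx,
      smul_comm]
  have hux : u • x = x := by
    refine smul_eq_self_of_isBounded_range_pow_smul hu ?_
    obtain ⟨C, hC⟩ := hb.exists_norm_le
    refine isBounded_iff_forall_norm_le.2 ⟨C, ?_⟩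
    rintro _ ⟨n, rfl⟩
    calc ‖u ^ n • x‖ ≤ t ^ n * ‖u ^ n • x‖ :=
          le_mul_of_one_le_left (norm_nonneg _) (one_le_pow₀ ht.le)
      _ = ‖(h * u) ^ n • x‖ := by
          rw [horbit, norm_smul (t ^ n), Real.norm_of_nonneg (by positivity)]
      _ ≤ C := hC _ (mem_range_self n)
  have hfix (n : ℕ) : u ^ n • x = x := by
    simpa using MulAction.mem_fixedBy_zpow (α := V) hux n
  exact eq_zero_of_isBounded_range_pow_smul ht (by simpa only [horbit, hfix] using hb)

theorem eq_zero_of_mem_boundedOrbits_of_smul_eq {h u : (V →L[ℝ] V)ˣ} (hhu : Commute h u)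
    (hu : IsNilpotent ((u : V →L[ℝ] V) - 1)) {t : ℝ} (ht₀ : 0 < t) (ht₁ : t ≠ 1) {x : V}
    (hx : h • x = t • x) (hxW : x ∈ boundedOrbits (h * u)) : x = 0 := by
  rw [mem_boundedOrbits_iff_nat] at hxW
  obtain ht | ht := ht₁.lt_or_gt
  · refine eq_zero_of_isBounded_range_mul_pow_smul hhu.inv_inv (Units.isNilpotent_inv_sub_one hu)
      ((one_lt_inv₀ ht₀).2 ht) ?_ ?_
    · rw [inv_smul_eq_iff, smul_comm, hx, inv_smul_smul₀ ht₀.ne']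
    · simpa only [hhu.mul_inv] using hxW.2
  · exact eq_zero_of_isBounded_range_mul_pow_smul hhu hu ht hx hxW.1

theorem boundedOrbits_mul_le_eigenspace_one [FiniteDimensional ℝ V] {ι : Type*} [Fintype ι]
    {h u : (V →L[ℝ] V)ˣ} (hhu : Commute h u) (b : Module.Basis ι ℝ V) {c : ι → ℝ}
    (hc : ∀ i, 0 < c i) (hb : ∀ i, (h : V →L[ℝ] V) (b i) = c i • b i)
    (hu : IsNilpotent ((u : V →L[ℝ] V) - 1)) :
    boundedOrbits (h * u) ≤ eigenspace ((h : V →L[ℝ] V) : V →ₗ[ℝ] V) 1 := by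
  refine Submodule.le_eigenspace_of_inf_eigenspace_eq_bot
    (fun x hx => smul_mem_boundedOrbits ((Commute.refl h).mul_right hhu) hx)
    (iSup_eigenspace_eq_top_of_basis b hb) fun μ hμ => ?_
  refine (Submodule.eq_bot_iff _).2 fun x ⟨hxW, hxE⟩ => ?_
  by_contra hx0
  obtain ⟨i, rfl⟩ := mem_range_of_hasEigenvector_of_basis b hb ⟨hxE, hx0⟩
  exact hx0 (eq_zero_of_mem_boundedOrbits_of_smul_eq hhu hu (hc i) hμ
    (mem_eigenspace_iff.1 hxE) hxW)

theorem mem_boundedOrbits_mul_iff_smul_eq_self [FiniteDimensional ℝ V] {ι : Type*} [Fintype ι]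
    {h u : (V →L[ℝ] V)ˣ} (hhu : Commute h u) (b : Module.Basis ι ℝ V) {c : ι → ℝ}
    (hc : ∀ i, 0 < c i) (hb : ∀ i, (h : V →L[ℝ] V) (b i) = c i • b i)
    (hu : IsNilpotent ((u : V →L[ℝ] V) - 1)) {v : V} :
    v ∈ boundedOrbits (h * u) ↔ (h * u) • v = v := by
  constructor
  · intro hv
    have hhv : h • v = v := by
      have := mem_eigenspace_iff.1 (boundedOrbits_mul_le_eigenspace_one hhu b hc hb hu hv)
      rwa [one_smul] at this
    have huv : u • v = v := by
      refine smul_eq_self_of_isBounded_range_pow_smul hu ?_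
      have hfix (n : ℕ) : h ^ n • v = v := by
        simpa using MulAction.mem_fixedBy_zpow (α := V) hhv n
      simpa only [hhu.mul_pow, mul_smul, (hhu.pow_pow _ _).eq, hfix] using
        (mem_boundedOrbits_iff_nat.1 hv).1
    rw [mul_smul, huv, hhv]
  · intro hv
    exact isBounded_singleton.subset (range_subset_iff.2 fun n => MulAction.mem_fixedBy_zpow hv n)

end Operators

theorem bounded_orbit_iff_fixed_by_hyperbolic_unipotent {V : Type*}
    [NormedAddCommGroup V] [NormedSpace ℝ V] [FiniteDimensional ℝ V]
    (g ge gh gu : (V →L[ℝ] V)ˣ)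
    (hcomm₁ : ge * gh = gh * ge) (hcomm₂ : ge * gu = gu * ge)
    (hcomm₃ : gh * gu = gu * gh)
    (hg : g = ge * gh * gu)
    (hell : IsCompact (closure (Set.range fun n : ℤ => ge ^ n)))
    (hhyp : ∃ (b : Module.Basis (Fin (Module.finrank ℝ V)) ℝ V)
        (c : Fin (Module.finrank ℝ V) → ℝ),
        (∀ i, 0 < c i) ∧ ∀ i, (gh : V →L[ℝ] V) (b i) = c i • b i)
    (huni : ∃ N : ℕ, ((gu : V →L[ℝ] V) - 1) ^ N = 0)
    (v : V) :
    (IsBounded (Set.range fun n : ℕ => ((g ^ n : (V →L[ℝ] V)ˣ) : V →L[ℝ] V) v) ∧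
      IsBounded (Set.range fun n : ℕ => ((g⁻¹ ^ n : (V →L[ℝ] V)ˣ) : V →L[ℝ] V) v)) ↔
    ((gh * gu : (V →L[ℝ] V)ˣ) : V →L[ℝ] V) v = v := by
  obtain ⟨b, c, hc, hb⟩ := hhyp
  have hge : IsBounded (range fun n : ℤ => ((ge ^ n : (V →L[ℝ] V)ˣ) : V →L[ℝ] V)) :=
    (hell.image Units.continuous_val).isBounded.subset <|
      range_subset_iff.2 fun n => mem_image_of_mem _ (subset_closure (mem_range_self n))
  rw [hg, mul_assoc]
  calc _ ↔ v ∈ boundedOrbits (ge * (gh * gu)) := mem_boundedOrbits_iff_nat.symm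
    _ ↔ v ∈ boundedOrbits (gh * gu) := by
      rw [boundedOrbits_mul_of_isBounded (Commute.mul_right hcomm₁ hcomm₂) hge]
    _ ↔ _ := mem_boundedOrbits_mul_iff_smul_eq_self hcomm₃ b hc hb huni
end

section
/- If μ is a finite positive Borel measure on a finite-dimensional real vector space V whose support spans V, then every element of the stabilizer group GL(V)^μ = {g ∈ GL(V) : g_*μ = μ} is elliptic, i.e., generates a relatively compact subgroup of GL(V). -/
/-!
Powers of `g` preserve `μ`, so it suffices that every `μ`-preserving linear map `T` has norm
bounded in terms of `μ` alone; since `g⁻ⁿ` is again such a map, the powers then stay in a compact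
subset of `GL(V)`. Pick a basis `bᵢ` in the support of `μ`. Each ball `B(bᵢ, ε)` has positive
mass, which exceeds the mass outside a large ball `B(0, R)`; as `T⁻¹(B(0, R)ᶜ)` has that same
mass, `T` maps some point of `B(bᵢ, ε)` into `B(0, R)`, whence `‖T bᵢ‖ ≤ R + ε‖T‖`. Controlling
`‖T‖` by its values on the basis and choosing `ε` small absorbs `ε‖T‖` into the left side.
-/

open MeasureTheory

open Filter Metric Topology

namespace MeasureTheory

lemma tendsto_measure_compl_closedBall_atTop {α : Type*} [PseudoMetricSpace α]
    [MeasurableSpace α] [OpensMeasurableSpace α] (μ : Measure α) [IsFiniteMeasure μ] (x : α) :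
    Tendsto (fun r : ℝ => μ (closedBall x r)ᶜ) atTop (𝓝 0) := by
  have h := tendsto_measure_iInter_atTop (μ := μ) (s := fun r : ℝ => (closedBall x r)ᶜ)
    (fun _ => measurableSet_closedBall.compl.nullMeasurableSet)
    (fun _ _ hrs => Set.compl_subset_compl.2 (closedBall_subset_closedBall hrs))
    ⟨0, measure_ne_top μ _⟩
  rwa [Set.iInter_eq_empty_iff.2 fun y => ⟨dist y x, by simp⟩, measure_empty] at h

/-- The group `GL(E)^μ` of continuous linear automorphisms `g` with `g_* μ = μ`. -/
def measureStabilizer {R E : Type*} [Semiring R] [TopologicalSpace E] [AddCommMonoid E]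
    [Module R E] [MeasurableSpace E] [BorelSpace E] (μ : Measure E) :
    Subgroup (E →L[R] E)ˣ where
  carrier := {g | μ.map (g : E →L[R] E) = μ}
  one_mem' := Measure.map_id
  mul_mem' {g h} hg hh := by
    rw [Set.mem_ofPred_eq, Units.val_mul, FunLike.coe_mul_eq_comp, ← Measure.map_map
      (g : E →L[R] E).continuous.measurable (h : E →L[R] E).continuous.measurable, hh, hg]
  inv_mem' {g} hg := by
    rw [Set.mem_ofPred_eq] at *
    conv_lhs => rw [← hg]
    rw [Measure.map_map ((g⁻¹ : (E →L[R] E)ˣ) : E →L[R] E).continuous.measurable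
      (g : E →L[R] E).continuous.measurable, ← FunLike.coe_mul_eq_comp, ← Units.val_mul,
      inv_mul_cancel, Units.val_one, FunLike.coe_one_eq_id, Measure.map_id]

lemma exists_norm_apply_le_of_mem_msupport {𝕜 E : Type*} [NontriviallyNormedField 𝕜]
    [SeminormedAddCommGroup E] [NormedSpace 𝕜 E] [MeasurableSpace E] [BorelSpace E]
    (μ : Measure E) [IsFiniteMeasure μ] {x : E} (hx : x ∈ msupport μ) {ε : ℝ} (hε : 0 < ε) :
    ∃ R, ∀ T : E →L[𝕜] E, μ.map T = μ → ‖T x‖ ≤ R + ‖T‖ * ε := by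
  have hball : μ (ball x ε) ≠ 0 := hx _ isOpen_ball (mem_ball_self hε)
  obtain ⟨R, hR⟩ := ((tendsto_measure_compl_closedBall_atTop μ 0).eventually_lt_const
    (pos_iff_ne_zero.2 hball)).exists
  refine ⟨R, fun T hT => ?_⟩
  obtain ⟨y, hyx, hTy⟩ : ∃ y ∈ ball x ε, ‖T y‖ ≤ R := by
    by_contra! h
    have hsub : ball x ε ⊆ T ⁻¹' (closedBall 0 R)ᶜ := fun y hy => by simpa using h y hy
    have := measure_mono (μ := μ) hsub
    rw [← Measure.map_apply T.continuous.measurable measurableSet_closedBall.compl, hT] at this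
    exact this.not_gt hR
  calc ‖T x‖ = ‖T y + T (x - y)‖ := by rw [map_sub, add_sub_cancel]
    _ ≤ ‖T y‖ + ‖T‖ * ‖x - y‖ := (norm_add_le _ _).trans (add_le_add_right (T.le_opNorm _) _)
    _ ≤ R + ‖T‖ * ε := by
      gcongr
      rw [← dist_eq_norm, dist_comm]
      exact (mem_ball.1 hyx).le

lemma exists_norm_le_of_map_eq_self {𝕜 E : Type*} [NontriviallyNormedField 𝕜] [CompleteSpace 𝕜]
    [NormedAddCommGroup E] [NormedSpace 𝕜 E] [FiniteDimensional 𝕜 E] [MeasurableSpace E]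
    [BorelSpace E] (μ : Measure E) [IsFiniteMeasure μ]
    (hspan : Submodule.span 𝕜 (msupport μ) = ⊤) :
    ∃ B, ∀ T : E →L[𝕜] E, μ.map T = μ → ‖T‖ ≤ B := by
  let b := Module.Basis.ofSpan hspan.ge
  have hsupp (i) : b i ∈ msupport μ := Module.Basis.ofSpan_subset hspan.ge ⟨i, rfl⟩
  obtain ⟨C, hC, hbasis⟩ := b.exists_opNorm_le (F := E)
  have hε : 0 < (2 * C)⁻¹ := by positivity
  choose R hR using fun i => exists_norm_apply_le_of_mem_msupport (𝕜 := 𝕜) μ (hsupp i) hε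
  obtain ⟨R₀, hR₀⟩ := Finite.exists_le R
  refine ⟨2 * C * max R₀ 0, fun T hT => ?_⟩
  have hT : ‖T‖ ≤ C * (max R₀ 0 + ‖T‖ * (2 * C)⁻¹) :=
    hbasis (by positivity) fun i =>
      (hR i T hT).trans (by gcongr; exact (hR₀ i).trans (le_max_left _ _))
  have hhalf : C * (‖T‖ * (2 * C)⁻¹) = ‖T‖ / 2 := by field_simp
  nlinarith

end MeasureTheory

lemma Units.isCompact_closure_of_norm_le {R : Type*} [NormedRing R] [ProperSpace R]
    {S : Set Rˣ} {B : ℝ} (hS : ∀ u ∈ S, ‖(u : R)‖ ≤ B ∧ ‖((u⁻¹ : Rˣ) : R)‖ ≤ B) :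
    IsCompact (closure S) := by
  have hK : IsCompact (closedBall (0 : R) B ×ˢ (MulOpposite.op '' closedBall (0 : R) B)) :=
    (isCompact_closedBall 0 B).prod ((isCompact_closedBall 0 B).image MulOpposite.continuous_op)
  refine (Units.isClosedEmbedding_embedProduct.isCompact_preimage hK).of_isClosed_subset
    isClosed_closure <| closure_minimal (fun u hu => ?_) <|
      hK.isClosed.preimage Units.continuous_embedProduct
  exact ⟨mem_closedBall_zero_iff.2 (hS u hu).1, _, mem_closedBall_zero_iff.2 (hS u hu).2, rfl⟩

theorem stabilizer_of_spanning_finite_measure_elliptic {V : Type*}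
    [NormedAddCommGroup V] [NormedSpace ℝ V] [FiniteDimensional ℝ V]
    [MeasurableSpace V] [BorelSpace V]
    (μ : Measure V) [IsFiniteMeasure μ]
    (hspan : Submodule.span ℝ (msupport μ) = ⊤)
    (g : (V →L[ℝ] V)ˣ) (hinv : μ.map (g : V →L[ℝ] V) = μ) :
    IsCompact (closure (Set.range fun n : ℤ => g ^ n)) := by
  obtain ⟨B, hB⟩ := exists_norm_le_of_map_eq_self μ hspan
  have hpow (n : ℤ) : g ^ n ∈ measureStabilizer μ := zpow_mem hinv n
  refine Units.isCompact_closure_of_norm_le (B := B) ?_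
  rintro _ ⟨n, rfl⟩
  exact ⟨hB _ (hpow n), by rw [← zpow_neg]; exact hB _ (hpow (-n))⟩
end

section
/- Let μ be a positive Borel measure on V* supported in a set whose closed convex hull C_μ contains no affine line, and suppose μ is tempered (i.e., ∫ (1+‖α‖²)^{−k} dμ(α) < ∞ for some k). Then for every x in the interior of the cone B(C_μ) = {v : inf ⟨C_μ, v⟩ > −∞}, the Laplace transform L(μ)(x) = ∫ e^{−α(x)} dμ(α) is finite. -/
/-!
For `x` in the interior of `B(C)`, the functionals of `C` are bounded below by a common constant
`m` on a whole ball `closedBall x δ`; testing `α` at `x ± δ u` gives the coercivity estimate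
`m + δ ‖α‖ ≤ α x` on `C`. Hence `e^{-α x} ≤ e^{-m} e^{-δ ‖α‖}` on the support of `μ`, and this
exponential decay beats any polynomial weight `(1 + ‖α‖²)^k`, whose inverse is `μ`-integrable.
-/

open MeasureTheory
open scoped ENNReal

open Set Metric Filter Topology

lemma msupport_eq_support {W : Type*} [TopologicalSpace W] [MeasurableSpace W]
    (μ : Measure W) : msupport μ = μ.support := by
  ext x
  simp only [msupport, Measure.support_eq_forall_isOpen, mem_ofPred_eq, pos_iff_ne_zero]
  exact forall_congr' fun U => forall_comm

section BarrierCone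

variable {V : Type*} [NormedAddCommGroup V] [NormedSpace ℝ V]

/-- The cone `B(C)` of the paper. -/
def barrierCone (C : Set (V →L[ℝ] ℝ)) : Set V := {v | ∃ m : ℝ, ∀ α ∈ C, m ≤ α v}

lemma convex_setOf_forall_le (C : Set (V →L[ℝ] ℝ)) (m : ℝ) :
    Convex ℝ {v : V | ∀ α ∈ C, m ≤ α v} := by
  simp only [ofPred_forall]
  exact convex_iInter₂ fun α _ => convex_halfSpace_ge α.toLinearMap.isLinear m

/-- The lower bounds at the vertices of a simplex around `x` inside `B(C)` propagate to the
simplex by convexity. -/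
lemma exists_eventually_forall_le_of_mem_interior_barrierCone [FiniteDimensional ℝ V]
    {C : Set (V →L[ℝ] ℝ)} {x : V} (hx : x ∈ interior (barrierCone C)) :
    ∃ m : ℝ, ∀ᶠ v in 𝓝 x, ∀ α ∈ C, m ≤ α v := by
  obtain ⟨b, hxb, hbC⟩ :=
    exists_mem_interior_convexHull_affineBasis (mem_interior_iff_mem_nhds.1 hx)
  choose m hm using fun i => hbC (subset_convexHull ℝ _ (mem_range_self i))
  obtain ⟨m₀, hm₀⟩ := Finite.exists_ge m
  refine ⟨m₀, mem_of_superset (isOpen_interior.mem_nhds hxb) (interior_subset.trans ?_)⟩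
  refine convexHull_min ?_ (convex_setOf_forall_le C m₀)
  rintro _ ⟨i, rfl⟩ α hα
  exact (hm₀ i).trans (hm i α hα)

lemma add_mul_norm_le_of_forall_closedBall_le {α : V →L[ℝ] ℝ} {x : V} {m δ : ℝ} (hδ : 0 < δ)
    (h : ∀ v ∈ closedBall x δ, m ≤ α v) : m + δ * ‖α‖ ≤ α x := by
  have hmx : m ≤ α x := h x (mem_closedBall_self hδ.le)
  have hnorm : ‖α‖ ≤ (α x - m) / δ := by
    refine α.opNorm_le_of_unit_norm (div_nonneg (sub_nonneg.2 hmx) hδ.le) fun u hu => ?_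
    have hline : ∀ s : ℝ, |s| ≤ δ → m ≤ α x + s * α u := fun s hs => by
      simpa using h (x + s • u) (by simpa [norm_smul, hu] using hs)
    have hplus := hline δ (abs_of_pos hδ).le
    have hminus := hline (-δ) (by rw [abs_neg, abs_of_pos hδ])
    have habs : |δ * α u| ≤ α x - m := abs_le.2 ⟨by linarith, by linarith⟩
    rw [abs_mul, abs_of_pos hδ] at habs
    rw [Real.norm_eq_abs, le_div_iff₀ hδ]
    linarith
  rw [le_div_iff₀ hδ] at hnorm
  linarith

lemma exists_add_mul_norm_le_of_mem_interior_barrierCone [FiniteDimensional ℝ V]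
    {C : Set (V →L[ℝ] ℝ)} {x : V} (hx : x ∈ interior (barrierCone C)) :
    ∃ m c : ℝ, 0 < c ∧ ∀ α ∈ C, m + c * ‖α‖ ≤ α x := by
  obtain ⟨m, hm⟩ := exists_eventually_forall_le_of_mem_interior_barrierCone hx
  obtain ⟨δ, hδ, hball⟩ := nhds_basis_closedBall.mem_iff.1 hm
  exact ⟨m, δ, hδ, fun α hα =>
    add_mul_norm_le_of_forall_closedBall_le hδ fun v hv => hball hv α hα⟩

end BarrierCone

lemma one_add_pow_le_mul_exp (n : ℕ) {c t : ℝ} (hc : 0 < c) (ht : 0 ≤ t) :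
    (1 + t) ^ n ≤ max 1 (n / c) ^ n * Real.exp (c * t) := by
  rcases Nat.eq_zero_or_pos n with rfl | hn
  · simpa using Real.one_le_exp (by positivity)
  set M := max 1 (n / c)
  have hn' : (0 : ℝ) < n := Nat.cast_pos.2 hn
  have hMc : 1 ≤ M * (c / n) := by
    calc (1 : ℝ) = n / c * (c / n) := by field_simp
      _ ≤ M * (c / n) := by gcongr; exact le_max_right _ _
  have hlin : 1 + t ≤ M * Real.exp (c * t / n) :=
    calc 1 + t ≤ M + M * (c / n) * t := by nlinarith [le_max_left (1 : ℝ) (n / c)]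
      _ = M * (c * t / n + 1) := by ring
      _ ≤ M * Real.exp (c * t / n) := by
        gcongr
        exact Real.add_one_le_exp _
  calc (1 + t) ^ n ≤ (M * Real.exp (c * t / n)) ^ n := by gcongr
    _ = M ^ n * Real.exp (c * t) := by
      rw [mul_pow, ← Real.exp_nat_mul, mul_div_cancel₀ _ hn'.ne']

lemma one_add_sq_pow_le_mul_exp (k : ℕ) {c t : ℝ} (hc : 0 < c) (ht : 0 ≤ t) :
    (1 + t ^ 2) ^ k ≤ max 1 (↑(2 * k) / c) ^ (2 * k) * Real.exp (c * t) :=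
  calc (1 + t ^ 2) ^ k ≤ ((1 + t) ^ 2) ^ k := by gcongr; nlinarith
    _ = (1 + t) ^ (2 * k) := by rw [← pow_mul, mul_comm]
    _ ≤ _ := one_add_pow_le_mul_exp (2 * k) hc ht

lemma lintegral_exp_neg_lt_top_of_tempered {E : Type*} [SeminormedAddCommGroup E]
    [MeasurableSpace E]
    {μ : Measure E} {f : E → ℝ} {m c : ℝ} {k : ℕ} (hc : 0 < c)
    (hk : ∫⁻ α, (ENNReal.ofReal ((1 + ‖α‖ ^ 2) ^ k))⁻¹ ∂μ < ⊤)
    (hf : ∀ᵐ α ∂μ, m + c * ‖α‖ ≤ f α) :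
    ∫⁻ α, ENNReal.ofReal (Real.exp (-f α)) ∂μ < ⊤ := by
  set A := Real.exp (-m) * max 1 (↑(2 * k) / c) ^ (2 * k) with hA
  have hpt : ∀ α, m + c * ‖α‖ ≤ f α → ENNReal.ofReal (Real.exp (-f α)) ≤
      ENNReal.ofReal A * (ENNReal.ofReal ((1 + ‖α‖ ^ 2) ^ k))⁻¹ := by
    intro α hα
    have hp : 0 < (1 + ‖α‖ ^ 2) ^ k := by positivity
    rw [← ENNReal.ofReal_inv_of_pos hp, ← ENNReal.ofReal_mul (by positivity)]
    refine ENNReal.ofReal_le_ofReal ?_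
    rw [← div_eq_mul_inv, le_div_iff₀ hp]
    calc Real.exp (-f α) * (1 + ‖α‖ ^ 2) ^ k
        ≤ Real.exp (-f α) * (max 1 (↑(2 * k) / c) ^ (2 * k) * Real.exp (c * ‖α‖)) := by
          gcongr
          exact one_add_sq_pow_le_mul_exp k hc (norm_nonneg α)
      _ = max 1 (↑(2 * k) / c) ^ (2 * k) * Real.exp (c * ‖α‖ - f α) := by
          rw [sub_eq_neg_add, Real.exp_add]; ring
      _ ≤ A := by rw [hA, mul_comm]; gcongr; linarith
  calc ∫⁻ α, ENNReal.ofReal (Real.exp (-f α)) ∂μ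
      ≤ ∫⁻ α, ENNReal.ofReal A * (ENNReal.ofReal ((1 + ‖α‖ ^ 2) ^ k))⁻¹ ∂μ :=
        lintegral_mono_ae (hf.mono hpt)
    _ = ENNReal.ofReal A * ∫⁻ α, (ENNReal.ofReal ((1 + ‖α‖ ^ 2) ^ k))⁻¹ ∂μ :=
        lintegral_const_mul' _ _ ENNReal.ofReal_ne_top
    _ < ⊤ := ENNReal.mul_lt_top ENNReal.ofReal_lt_top hk

theorem tempered_laplace_finite_on_interior_general {V : Type*} [NormedAddCommGroup V]
    [NormedSpace ℝ V] [FiniteDimensional ℝ V]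
    [MeasurableSpace (V →L[ℝ] ℝ)]
    (μ : Measure (V →L[ℝ] ℝ))
    (Cμ : Set (V →L[ℝ] ℝ)) (hCμ : Cμ = closure (convexHull ℝ (msupport μ)))
    (htemp : ∃ k : ℕ, ∫⁻ α, (ENNReal.ofReal ((1 + ‖α‖ ^ 2) ^ k))⁻¹ ∂μ < ⊤)
    (x : V) (hx : x ∈ interior {v : V | ∃ m : ℝ, ∀ α ∈ Cμ, m ≤ α v}) :
    ∫⁻ α, ENNReal.ofReal (Real.exp (-(α x))) ∂μ < ⊤ := by
  obtain ⟨k, hk⟩ := htemp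
  obtain ⟨m, c, hc, hmc⟩ := exists_add_mul_norm_le_of_mem_interior_barrierCone (C := Cμ) hx
  have hCμ_ae : ∀ᵐ α ∂μ, α ∈ Cμ := by
    filter_upwards [Measure.support_mem_ae (μ := μ)] with α hα
    exact hCμ ▸ subset_closure (subset_convexHull ℝ _ ((msupport_eq_support μ).ge hα))
  exact lintegral_exp_neg_lt_top_of_tempered hc hk (hCμ_ae.mono hmc)

theorem tempered_laplace_finite_on_interior {V : Type*} [NormedAddCommGroup V]
    [NormedSpace ℝ V] [FiniteDimensional ℝ V]
    [MeasurableSpace (V →L[ℝ] ℝ)] [BorelSpace (V →L[ℝ] ℝ)]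
    (μ : Measure (V →L[ℝ] ℝ))
    (Cμ : Set (V →L[ℝ] ℝ)) (hCμ : Cμ = closure (convexHull ℝ (msupport μ)))
    (hline : ¬ ∃ (a b : V →L[ℝ] ℝ), b ≠ 0 ∧ ∀ t : ℝ, a + t • b ∈ Cμ)
    (htemp : ∃ k : ℕ, ∫⁻ α, (ENNReal.ofReal ((1 + ‖α‖ ^ 2) ^ k))⁻¹ ∂μ < ⊤)
    (x : V) (hx : x ∈ interior {v : V | ∃ m : ℝ, ∀ α ∈ Cμ, m ≤ α v}) :
    ∫⁻ α, ENNReal.ofReal (Real.exp (-(α x))) ∂μ < ⊤ :=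
  tempered_laplace_finite_on_interior_general μ Cμ hCμ htemp x hx
end

section
/- Let μ be a positive Borel measure on V* whose support is contained in a pointed closed convex cone C (C ∩ −C = {0}), and suppose there exists x in the interior of the dual cone C* and constants c, k, δ > 0 with L(μ)(t·x) ≤ c·t^{−k} for all 0 < t ≤ δ. Then μ is tempered: there exists m ∈ ℕ with ∫ (1+‖α‖²)^{−m} dμ(α) < ∞. -/
/-!
On the ball `‖α‖ ≤ R` we have `α ((δ / R) • x) ≤ δ ‖x‖`, so Chebyshev's inequality applied to the
Laplace bound at `t = δ / R` gives `μ (closedBall 0 R) ≤ e^{δ ‖x‖} c δ^{-k} R^k` for `R ≥ 1`.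
Polynomial growth of balls makes `(1 + ‖α‖²)^{-m}` integrable for `m = ⌈k⌉ + 1`: cover by the balls
of radius `2^(n+1)` and weight the `n`-th one by `2^{-nm}`, which yields a geometric series.
-/

open MeasureTheory
open scoped ENNReal

open Metric

section PolynomialGrowth

variable {E : Type*} [NormedAddCommGroup E]

lemma inv_one_add_sq_pow_le_tsum_indicator_closedBall (m : ℕ) (a : E) :
    (ENNReal.ofReal ((1 + ‖a‖ ^ 2) ^ m))⁻¹ ≤
      ∑' n : ℕ, ((2 : ℝ≥0∞) ^ m)⁻¹ ^ n * (closedBall (0 : E) (2 ^ (n + 1))).indicator 1 a := by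
  obtain ⟨n, hn, hn'⟩ := exists_nat_pow_near (le_max_left 1 ‖a‖) one_lt_two
  have ha : a ∈ closedBall (0 : E) (2 ^ (n + 1)) :=
    mem_closedBall_zero_iff.2 ((le_max_right _ _).trans hn'.le)
  refine le_trans ?_ (ENNReal.le_tsum n)
  rw [Set.indicator_of_mem ha, Pi.one_apply, mul_one, ← ENNReal.inv_pow, ENNReal.inv_le_inv,
    ← pow_mul, mul_comm, pow_mul, ← ENNReal.ofReal_ofNat 2, ← ENNReal.ofReal_pow zero_le_two,
    ← ENNReal.ofReal_pow (by positivity)]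
  refine ENNReal.ofReal_le_ofReal (pow_le_pow_left₀ (by positivity) (hn.trans ?_) m)
  exact max_le (by nlinarith) (by nlinarith [norm_nonneg a])

variable [MeasurableSpace E] [OpensMeasurableSpace E]

lemma lintegral_inv_one_add_sq_pow_lt_top_of_measure_closedBall_le {μ : Measure E} {C : ℝ≥0∞}
    (hC : C ≠ ∞) {k : ℕ} (h : ∀ R : ℝ, 1 ≤ R → μ (closedBall 0 R) ≤ C * ENNReal.ofReal (R ^ k)) :
    ∫⁻ a, (ENNReal.ofReal ((1 + ‖a‖ ^ 2) ^ (k + 1)))⁻¹ ∂μ < ∞ := by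
  have hterm (n : ℕ) : ((2 : ℝ≥0∞) ^ (k + 1))⁻¹ ^ n * ENNReal.ofReal ((2 ^ (n + 1)) ^ k) =
      2 ^ k * 2⁻¹ ^ n := by
    rw [← ENNReal.toReal_eq_toReal_iff' (by finiteness) (by finiteness)]
    simp only [ENNReal.toReal_mul, ENNReal.toReal_pow, ENNReal.toReal_inv, ENNReal.toReal_ofNat,
      ENNReal.toReal_ofReal (by positivity : (0:ℝ) ≤ (2 ^ (n + 1)) ^ k)]
    rw [inv_pow, inv_pow, ← pow_mul, ← pow_mul]
    field_simp
    rw [← pow_add, ← pow_add]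
    ring_nf
  calc ∫⁻ a, (ENNReal.ofReal ((1 + ‖a‖ ^ 2) ^ (k + 1)))⁻¹ ∂μ
      ≤ ∫⁻ a, ∑' n : ℕ, ((2 : ℝ≥0∞) ^ (k + 1))⁻¹ ^ n *
          (closedBall (0 : E) (2 ^ (n + 1))).indicator 1 a ∂μ :=
        lintegral_mono fun a => inv_one_add_sq_pow_le_tsum_indicator_closedBall _ a
    _ = ∑' n : ℕ, ((2 : ℝ≥0∞) ^ (k + 1))⁻¹ ^ n * μ (closedBall 0 (2 ^ (n + 1))) := by
        rw [lintegral_tsum fun n =>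
          ((measurable_one.indicator measurableSet_closedBall).const_mul _).aemeasurable]
        simp_rw [lintegral_const_mul _ (measurable_one.indicator measurableSet_closedBall),
          lintegral_indicator_one measurableSet_closedBall]
    _ ≤ ∑' n : ℕ, C * 2 ^ k * 2⁻¹ ^ n := by
        refine ENNReal.tsum_le_tsum fun n => ?_
        rw [mul_assoc, ← hterm, mul_left_comm]
        gcongr
        exact h _ (one_le_pow₀ one_le_two)
    _ < ∞ := by
        rw [ENNReal.tsum_mul_left, ENNReal.tsum_geometric, ENNReal.one_sub_inv_two, inv_inv]
        finiteness

end PolynomialGrowth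

lemma measure_closedBall_le_exp_mul_lintegral_exp {E : Type*} [NormedAddCommGroup E]
    [NormedSpace ℝ E] [MeasurableSpace (E →L[ℝ] ℝ)] [OpensMeasurableSpace (E →L[ℝ] ℝ)]
    (μ : Measure (E →L[ℝ] ℝ)) (v : E) (R : ℝ) :
    μ (closedBall 0 R) ≤
      ENNReal.ofReal (Real.exp (R * ‖v‖)) * ∫⁻ α, ENNReal.ofReal (Real.exp (-α v)) ∂μ := by
  have hle (α : E →L[ℝ] ℝ) (hα : α ∈ closedBall 0 R) :
      1 ≤ ENNReal.ofReal (Real.exp (R * ‖v‖)) * ENNReal.ofReal (Real.exp (-α v)) := by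
    have hαv : α v ≤ R * ‖v‖ := calc
      α v ≤ ‖α‖ * ‖v‖ := (le_abs_self _).trans (α.le_opNorm v)
      _ ≤ R * ‖v‖ := by gcongr; exact mem_closedBall_zero_iff.1 hα
    rw [← ENNReal.ofReal_mul (Real.exp_pos _).le, ← Real.exp_add]
    exact ENNReal.one_le_ofReal.2 (Real.one_le_exp (by linarith))
  calc μ (closedBall 0 R) = ∫⁻ _ in closedBall 0 R, 1 ∂μ := (setLIntegral_one _).symm
    _ ≤ ∫⁻ α in closedBall 0 R,
          ENNReal.ofReal (Real.exp (R * ‖v‖)) * ENNReal.ofReal (Real.exp (-α v)) ∂μ :=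
        setLIntegral_mono' measurableSet_closedBall hle
    _ ≤ ∫⁻ α, ENNReal.ofReal (Real.exp (R * ‖v‖)) * ENNReal.ofReal (Real.exp (-α v)) ∂μ :=
        setLIntegral_le_lintegral _ _
    _ = _ := lintegral_const_mul' _ _ ENNReal.ofReal_ne_top

theorem laplace_bound_implies_tempered_general {V : Type*} [NormedAddCommGroup V]
    [NormedSpace ℝ V]
    [MeasurableSpace (V →L[ℝ] ℝ)] [BorelSpace (V →L[ℝ] ℝ)]
    (μ : Measure (V →L[ℝ] ℝ))
    (x : V)
    (c k δ : ℝ) (hδ : 0 < δ)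
    (hbound : ∀ t : ℝ, 0 < t → t ≤ δ →
      (∫⁻ α, ENNReal.ofReal (Real.exp (-(α (t • x)))) ∂μ) ≤
        ENNReal.ofReal (c * t ^ (-k))) :
    ∃ m : ℕ, ∫⁻ α, (ENNReal.ofReal ((1 + ‖α‖ ^ 2) ^ m))⁻¹ ∂μ < ⊤ := by
  refine ⟨⌈k⌉₊ + 1, lintegral_inv_one_add_sq_pow_lt_top_of_measure_closedBall_le
    (C := ENNReal.ofReal (Real.exp (δ * ‖x‖)) * ENNReal.ofReal (c * δ ^ (-k))) (by finiteness)
    fun R hR => ?_⟩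
  have hR0 : 0 < R := one_pos.trans_le hR
  have ht : 0 < δ / R := div_pos hδ hR0
  have hexp : R * ‖(δ / R) • x‖ = δ * ‖x‖ := by
    rw [norm_smul, Real.norm_of_nonneg ht.le]
    field_simp
  calc μ (closedBall 0 R)
      ≤ ENNReal.ofReal (Real.exp (R * ‖(δ / R) • x‖)) *
          ∫⁻ α, ENNReal.ofReal (Real.exp (-α ((δ / R) • x))) ∂μ :=
        measure_closedBall_le_exp_mul_lintegral_exp μ _ R
    _ ≤ ENNReal.ofReal (Real.exp (δ * ‖x‖)) * ENNReal.ofReal (c * (δ / R) ^ (-k)) := by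
        rw [hexp]
        gcongr
        exact hbound _ ht (div_le_self hδ.le hR)
    _ = ENNReal.ofReal (Real.exp (δ * ‖x‖)) *
          (ENNReal.ofReal (c * δ ^ (-k)) * ENNReal.ofReal (R ^ k)) := by
        rw [← ENNReal.ofReal_mul' (Real.rpow_nonneg hR0.le k), Real.div_rpow hδ.le hR0.le,
          Real.rpow_neg hR0.le, div_inv_eq_mul, mul_assoc]
    _ ≤ _ := by
        rw [← mul_assoc, ← Real.rpow_natCast]
        gcongr
        exact Nat.le_ceil k

theorem laplace_bound_implies_tempered {V : Type*} [NormedAddCommGroup V]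
    [NormedSpace ℝ V] [FiniteDimensional ℝ V]
    [MeasurableSpace (V →L[ℝ] ℝ)] [BorelSpace (V →L[ℝ] ℝ)]
    (μ : Measure (V →L[ℝ] ℝ))
    (C : Set (V →L[ℝ] ℝ)) (hCconv : Convex ℝ C) (hCclosed : IsClosed C)
    (hCcone : ∀ t : ℝ, 0 ≤ t → ∀ α ∈ C, t • α ∈ C)
    (hCpointed : C ∩ (-C) ⊆ {0})
    (hsupp : msupport μ ⊆ C)
    (x : V) (hx : x ∈ interior {v : V | ∀ α ∈ C, 0 ≤ α v})
    (c k δ : ℝ) (hc : 0 < c) (hk : 0 < k) (hδ : 0 < δ)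
    (hbound : ∀ t : ℝ, 0 < t → t ≤ δ →
      (∫⁻ α, ENNReal.ofReal (Real.exp (-(α (t • x)))) ∂μ) ≤
        ENNReal.ofReal (c * t ^ (-k))) :
    ∃ m : ℕ, ∫⁻ α, (ENNReal.ofReal ((1 + ‖α‖ ^ 2) ^ m))⁻¹ ∂μ < ⊤ :=
  laplace_bound_implies_tempered_general μ x c k δ hδ hbound
end

section
/- Let M be a set with a σ-finite measure λ, V a finite-dimensional real vector space, Ψ : M → V* measurable, and for x ∈ V let z(x) = log ∫_M e^{−Ψ(m)(x)} dλ(m) be finite, defining the Gibbs probability measure dλ_x = e^{−z(x) − Ψ(·)(x)} dλ. Assume the expectation Q(x) = ∫_M Ψ dλ_x exists. Then among all probability measures ν = p·λ absolutely continuous with respect to λ with ∫ Ψ dν = Q(x) and finite entropy −∫ p log p dλ, the Gibbs measure λ_x is the unique maximizer of entropy, with entropy s(x) = z(x) + Q(x)(x). -/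
open MeasureTheory
open scoped ENNReal

lemma aux_int_wd {M : Type*} [MeasurableSpace M] (lam : Measure M)
    {E : Type*} [NormedAddCommGroup E] [NormedSpace ℝ E]
    {p : M → ℝ} (hp : Measurable p) (hp0 : ∀ m, 0 ≤ p m) (g : M → E) :
    ∫ m, g m ∂(lam.withDensity fun m => ENNReal.ofReal (p m)) = ∫ m, p m • g m ∂lam := by
  rw [show (fun m => ENNReal.ofReal (p m)) = (fun m => ((p m).toNNReal : ℝ≥0∞)) from rfl,
    integral_withDensity_eq_integral_smul hp.real_toNNReal]
  refine integral_congr_ae (Filter.Eventually.of_forall fun m => ?_)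
  simp only [NNReal.smul_def, Real.coe_toNNReal _ (hp0 m)]

lemma aux_integrable_wd {M : Type*} [MeasurableSpace M] (lam : Measure M)
    {E : Type*} [NormedAddCommGroup E] [NormedSpace ℝ E]
    {p : M → ℝ} (hp : Measurable p) (hp0 : ∀ m, 0 ≤ p m) (g : M → E) :
    Integrable g (lam.withDensity fun m => ENNReal.ofReal (p m)) ↔
      Integrable (fun m => p m • g m) lam := by
  rw [show (fun m => ENNReal.ofReal (p m)) = (fun m => ((p m).toNNReal : ℝ≥0∞)) from rfl,
    integrable_withDensity_iff_integrable_smul hp.real_toNNReal]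
  constructor <;> intro h <;> refine h.congr (Filter.Eventually.of_forall fun m => ?_) <;>
    simp only [NNReal.smul_def, Real.coe_toNNReal _ (hp0 m)]

theorem gibbs_measure_maximizes_entropy {M : Type*} [MeasurableSpace M]
    {V : Type*} [NormedAddCommGroup V] [NormedSpace ℝ V] [FiniteDimensional ℝ V]
    [MeasurableSpace (V →L[ℝ] ℝ)] [BorelSpace (V →L[ℝ] ℝ)]
    (lam : Measure M) [SigmaFinite lam]
    (Ψ : M → (V →L[ℝ] ℝ)) (hΨ : Measurable Ψ) (x : V)
    (Z : ℝ≥0∞) (hZ : Z = ∫⁻ m, ENNReal.ofReal (Real.exp (-(Ψ m x))) ∂lam)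
    (hZ0 : Z ≠ 0) (hZtop : Z ≠ ⊤)
    (z : ℝ) (hz : z = Real.log Z.toReal)
    (px : M → ℝ) (hpx : ∀ m, px m = Real.exp (-z - Ψ m x))
    (lamx : Measure M)
    (hlamx : lamx = lam.withDensity fun m => ENNReal.ofReal (px m))
    (hΨint : Integrable Ψ lamx)
    (Q : V →L[ℝ] ℝ) (hQ : Q = ∫ m, Ψ m ∂lamx) :
    (-∫ m, px m * Real.log (px m) ∂lam = z + Q x) ∧
      ∀ p : M → ℝ, Measurable p → (∀ m, 0 ≤ p m) →
        (∫⁻ m, ENNReal.ofReal (p m) ∂lam = 1) →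
        Integrable Ψ (lam.withDensity fun m => ENNReal.ofReal (p m)) →
        (∫ m, Ψ m ∂(lam.withDensity fun m => ENNReal.ofReal (p m)) = Q) →
        Integrable (fun m => p m * Real.log (p m)) lam →
        (-∫ m, p m * Real.log (p m) ∂lam ≤ z + Q x ∧
          (-∫ m, p m * Real.log (p m) ∂lam = z + Q x → p =ᵐ[lam] px)) := by
  have hZt : 0 < Z.toReal := ENNReal.toReal_pos hZ0 hZtop
  have hexpz : Real.exp z = Z.toReal := by rw [hz, Real.exp_log hZt]
  have hxmeas : Measurable fun m => Ψ m x :=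
    ((ContinuousLinearMap.apply ℝ ℝ x).continuous.measurable).comp hΨ
  have hpxpos : ∀ m, 0 < px m := fun m => (hpx m) ▸ Real.exp_pos _
  have hpx0 : ∀ m, 0 ≤ px m := fun m => (hpxpos m).le
  have hpxmeas : Measurable px := by
    rw [show px = fun m => Real.exp (-z - Ψ m x) from funext hpx]
    exact Real.measurable_exp.comp (measurable_const.sub hxmeas)
  have hlogpx : ∀ m, Real.log (px m) = -z - Ψ m x := fun m => by rw [hpx m, Real.log_exp]
  -- lintegral of px is 1
  have hpxl : ∫⁻ m, ENNReal.ofReal (px m) ∂lam = 1 := by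
    have h1 : ∀ m, ENNReal.ofReal (px m) =
        ENNReal.ofReal (Real.exp (-z)) * ENNReal.ofReal (Real.exp (-(Ψ m x))) := by
      intro m
      rw [hpx m, show (-z - Ψ m x) = -z + -(Ψ m x) by ring, Real.exp_add,
        ENNReal.ofReal_mul (Real.exp_pos _).le]
    calc ∫⁻ m, ENNReal.ofReal (px m) ∂lam
        = ∫⁻ m, ENNReal.ofReal (Real.exp (-z)) * ENNReal.ofReal (Real.exp (-(Ψ m x))) ∂lam := by
          simp_rw [h1]
      _ = ENNReal.ofReal (Real.exp (-z)) * ∫⁻ m, ENNReal.ofReal (Real.exp (-(Ψ m x))) ∂lam :=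
          lintegral_const_mul _ ((Real.measurable_exp.comp hxmeas.neg).ennreal_ofReal)
      _ = ENNReal.ofReal (Real.exp (-z)) * Z := by rw [← hZ]
      _ = 1 := by
          rw [Real.exp_neg, hexpz, ENNReal.ofReal_inv_of_pos hZt, ENNReal.ofReal_toReal hZtop,
            ENNReal.inv_mul_cancel hZ0 hZtop]
  -- generic facts about admissible densities
  have hgen : ∀ p : M → ℝ, Measurable p → (∀ m, 0 ≤ p m) →
      (∫⁻ m, ENNReal.ofReal (p m) ∂lam = 1) →
      Integrable Ψ (lam.withDensity fun m => ENNReal.ofReal (p m)) →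
      (∫ m, Ψ m ∂(lam.withDensity fun m => ENNReal.ofReal (p m)) = Q) →
      Integrable p lam ∧ Integrable (fun m => p m * (Ψ m x)) lam ∧
      (∫ m, p m ∂lam = 1) ∧ (∫ m, p m * (Ψ m x) ∂lam = Q x) := by
    intro p hp hp0 hl1 hint hQp
    have hpint : Integrable p lam := by
      refine ⟨hp.aestronglyMeasurable, ?_⟩
      rw [hasFiniteIntegral_iff_ofReal (Filter.Eventually.of_forall hp0), hl1]
      exact ENNReal.one_lt_top
    have hint1 : ∫ m, p m ∂lam = 1 := by
      rw [integral_eq_lintegral_of_nonneg_ae (Filter.Eventually.of_forall hp0)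
        hp.aestronglyMeasurable, hl1, ENNReal.toReal_one]
    have hintx : Integrable (fun m => Ψ m x) (lam.withDensity fun m => ENNReal.ofReal (p m)) := by
      have := (ContinuousLinearMap.apply ℝ ℝ x).integrable_comp hint
      simpa only [ContinuousLinearMap.apply_apply] using this
    have h2 : Integrable (fun m => p m * Ψ m x) lam := by
      have := (aux_integrable_wd lam hp hp0 (fun m => Ψ m x)).1 hintx
      simpa only [smul_eq_mul] using this
    have h3 : ∫ m, p m * Ψ m x ∂lam = Q x := by
      have e1 := ContinuousLinearMap.integral_comp_comm (ContinuousLinearMap.apply ℝ ℝ x) hint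
      simp only [ContinuousLinearMap.apply_apply] at e1
      rw [hQp] at e1
      have e2 := aux_int_wd lam hp hp0 (fun m => Ψ m x)
      simp only [smul_eq_mul] at e2
      rw [← e2]; exact e1
    exact ⟨hpint, h2, hint1, h3⟩
  -- integral of p * log px
  have hlogint : ∀ p : M → ℝ, Integrable p lam → Integrable (fun m => p m * Ψ m x) lam →
      (∫ m, p m ∂lam = 1) → (∫ m, p m * Ψ m x ∂lam = Q x) →
      Integrable (fun m => p m * Real.log (px m)) lam ∧
        ∫ m, p m * Real.log (px m) ∂lam = -z - Q x := by
    intro p hpint hpΨ hm1 hmQ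
    have hfun : (fun m => p m * Real.log (px m)) = fun m => (-z) * p m - p m * Ψ m x := by
      funext m; rw [hlogpx m]; ring
    refine ⟨by rw [hfun]; exact (hpint.const_mul (-z)).sub hpΨ, ?_⟩
    rw [hfun, integral_sub (hpint.const_mul (-z)) hpΨ, integral_const_mul, hm1, hmQ]
    ring
  have hpxadm := hgen px hpxmeas hpx0 hpxl (hlamx ▸ hΨint) (by rw [← hlamx, ← hQ])
  obtain ⟨hpxint, hpxΨ, hpx1, hpxQ⟩ := hpxadm
  obtain ⟨hpxlogint, hpxlogeq⟩ := hlogint px hpxint hpxΨ hpx1 hpxQ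
  constructor
  · rw [hpxlogeq]; ring
  · intro p hp hp0 hl1 hint hQp hplogint
    obtain ⟨hpint, hpΨ, hp1, hpQ⟩ := hgen p hp hp0 hl1 hint hQp
    obtain ⟨hplogpxint, hplogpxeq⟩ := hlogint p hpint hpΨ hp1 hpQ
    set g : M → ℝ := fun m => p m * Real.log (p m) - p m * Real.log (px m) with hg
    have hgint : Integrable g lam := hplogint.sub hplogpxint
    have hgeq : ∫ m, g m ∂lam = (∫ m, p m * Real.log (p m) ∂lam) + z + Q x := by
      rw [hg, integral_sub hplogint hplogpxint, hplogpxeq]; ring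
    set φ : M → ℝ := fun m => g m - (p m - px m) with hφ
    have hφ0 : ∀ m, 0 ≤ φ m := by
      intro m
      simp only [hφ, hg]
      rcases eq_or_lt_of_le (hp0 m) with h0 | hppos
      · rw [← h0]; simp [(hpx0 m)]
      · have hlog : Real.log (px m) - Real.log (p m) ≤ px m / p m - 1 := by
          have := Real.log_le_sub_one_of_pos (div_pos (hpxpos m) hppos)
          rwa [Real.log_div (ne_of_gt (hpxpos m)) (ne_of_gt hppos)] at this
        have hmul := mul_le_mul_of_nonneg_left hlog (le_of_lt hppos)
        have hpd : p m * (px m / p m - 1) = px m - p m := by field_simp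
        rw [hpd] at hmul
        nlinarith
    have hφint : Integrable φ lam := hgint.sub (hpint.sub hpxint)
    have hφeq : ∫ m, φ m ∂lam = ∫ m, g m ∂lam := by
      have hsub : Integrable (fun m => p m - px m) lam := hpint.sub hpxint
      have h' : ∫ m, (g m - (p m - px m)) ∂lam
          = (∫ m, g m ∂lam) - ∫ m, (p m - px m) ∂lam := integral_sub hgint hsub
      have h'' : ∫ m, (p m - px m) ∂lam = 0 := by
        rw [integral_sub hpint hpxint, hp1, hpx1]; ring
      simp only [hφ]
      rw [h', h'']; ring
    have hφnn : (0:ℝ) ≤ ∫ m, φ m ∂lam := integral_nonneg hφ0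
    constructor
    · have : (0:ℝ) ≤ (∫ m, p m * Real.log (p m) ∂lam) + z + Q x := by
        rw [← hgeq, ← hφeq]; exact hφnn
      linarith
    · intro heq
      have hφ0int : ∫ m, φ m ∂lam = 0 := by
        rw [hφeq, hgeq]; linarith
      have hae : φ =ᵐ[lam] 0 := (integral_eq_zero_iff_of_nonneg hφ0 hφint).1 hφ0int
      filter_upwards [hae] with m hm
      simp only [hφ, hg, Pi.zero_apply] at hm
      rcases eq_or_lt_of_le (hp0 m) with h0 | hppos
      · exfalso
        rw [← h0] at hm
        simp at hm
        exact (ne_of_gt (hpxpos m)) hm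
      · -- p m > 0
        have hkey : p m * (Real.log (p m) - Real.log (px m)) = p m - px m := by
          rw [mul_sub]; linarith
        set t := px m / p m with ht
        have htpos : 0 < t := div_pos (hpxpos m) hppos
        have hlogt : Real.log t = Real.log (px m) - Real.log (p m) :=
          Real.log_div (ne_of_gt (hpxpos m)) (ne_of_gt hppos)
        have hpt : p m * t = px m := by
          rw [ht, mul_div_cancel₀ _ (ne_of_gt hppos)]
        have hte : Real.log t = t - 1 := by
          have h1 : p m * Real.log t = p m * t - p m := by
            rw [hlogt, mul_sub, hpt]; linarith
          have := mul_left_cancel₀ (ne_of_gt hppos)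
            (show p m * Real.log t = p m * (t - 1) by rw [h1, mul_sub, mul_one])
          exact this
        have ht1 : t = 1 := by
          by_contra hne
          exact absurd hte (ne_of_lt (Real.log_lt_sub_one_of_pos htpos hne))
        have ht1' : px m / p m = 1 := by rw [← ht]; exact ht1
        exact ((div_eq_one_iff_eq (ne_of_gt hppos)).1 ht1').symm
end
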